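/- arXiv:2112.06043 — 9 statements merged into one kernel-verified Lean document; each statement's English description precedes it below -/
import Mathlib

section
/- Let λ, μ > 0, let x ≥ 0 and let e be a real number with 0 ≤ e ≤ x. Define h : [0,∞) × [0,∞) → ℝ by h(q,q′) = 0 if q ≤ x, and, for q > x: h(q,q′) = exp(−λ(x+e)) if q′ ≤ e; h(q,q′) = exp(−λ(x+q′)) if e < q′ < x; h(q,q′) = exp(−2λx) if q′ ≥ x. Then ∫₀^∞ ∫₀^∞ h(q,q′) · μe^{−μq} · μe^{−μq′} dq′ dq = e^{−λ(e+x)−μx}(1 − e^{−μe}) + (μ/(λ+μ)) e^{−(λ+μ)x}(e^{−(λ+μ)e} − e^{−(λ+μ)x}) + e^{−2(λ+μ)x}. -/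
open MeasureTheory Real

lemma hasDeriv_aux (c : ℝ) (hc : c ≠ 0) (y : ℝ) :
    HasDerivAt (fun q => -Real.exp (-c * q) / c) (Real.exp (-c * y)) y := by
  have h1 : HasDerivAt (fun q : ℝ => -c * q) (-c) y := by
    simpa using (hasDerivAt_id y).const_mul (-c)
  have h2 := ((h1.exp).div_const c).neg
  have h3 : -(Real.exp (-c * y) * -c / c) = Real.exp (-c * y) := by field_simp
  rw [h3] at h2
  have h4 : (fun q => -Real.exp (-c * q) / c) = -(fun x => Real.exp (-c * x) / c) := by
    funext q; simp [neg_div]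
  rw [h4]; exact h2

lemma expIoi (c : ℝ) (hc : 0 < c) (a : ℝ) :
    ∫ q in Set.Ioi a, Real.exp (-c * q) = Real.exp (-c * a) / c := by
  have hcont : ContinuousWithinAt (fun q => -Real.exp (-c * q) / c) (Set.Ici a) a :=
    (Continuous.div_const (by continuity) c).continuousWithinAt
  have hint : IntegrableOn (fun q => Real.exp (-c * q)) (Set.Ioi a) :=
    exp_neg_integrableOn_Ioi a hc
  have htend : Filter.Tendsto (fun q => -Real.exp (-c * q) / c) Filter.atTop (nhds 0) := by
    have h0 : Filter.Tendsto (fun q : ℝ => c * q) Filter.atTop Filter.atTop :=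
      Filter.Tendsto.const_mul_atTop hc Filter.tendsto_id
    have h1 : Filter.Tendsto (fun q : ℝ => Real.exp (-(c * q))) Filter.atTop (nhds 0) :=
      Real.tendsto_exp_neg_atTop_nhds_zero.comp h0
    have h2 : Filter.Tendsto (fun q : ℝ => -Real.exp (-(c * q)) / c) Filter.atTop
        (nhds (-0 / c)) := (h1.neg).div_const c
    simpa [neg_mul] using h2
  have := integral_Ioi_of_hasDerivAt_of_tendsto hcont
    (fun y _ => hasDeriv_aux c hc.ne' y) hint htend
  rw [this]
  field_simp
  ring

lemma expIoc (c : ℝ) (hc : 0 < c) (a b : ℝ) (hab : a ≤ b) :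
    ∫ q in Set.Ioc a b, Real.exp (-c * q) = (Real.exp (-c * a) - Real.exp (-c * b)) / c := by
  rw [← intervalIntegral.integral_of_le hab]
  rw [intervalIntegral.integral_eq_sub_of_hasDerivAt
    (fun y _ => hasDeriv_aux c hc.ne' y)
    (Continuous.intervalIntegrable (by continuity) a b)]
  field_simp
  ring

/-- Theorem 1 (computational core), 1D mmWave network: unconditioning the
conditional LoS serving probability `g_L(x | q, q')` over the independent
`Exp(μ)` distances `q, q'` to the nearest blockages. -/
theorem stmt_0 (lam mu x e : ℝ) (hlam : 0 < lam) (hmu : 0 < mu)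
    (hx : 0 ≤ x) (he : 0 ≤ e) (hex : e ≤ x) :
    (∫ q in Set.Ioi (0:ℝ), ∫ q' in Set.Ioi (0:ℝ),
      (if q ≤ x then (0:ℝ)
       else if q' ≤ e then Real.exp (-lam * (x + e))
       else if q' < x then Real.exp (-lam * (x + q'))
       else Real.exp (-2 * lam * x))
      * (mu * Real.exp (-mu * q)) * (mu * Real.exp (-mu * q')))
    = Real.exp (-lam * (e + x) - mu * x) * (1 - Real.exp (-mu * e))
      + mu / (lam + mu) * Real.exp (-(lam + mu) * x)
        * (Real.exp (-(lam + mu) * e) - Real.exp (-(lam + mu) * x))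
      + Real.exp (-2 * (lam + mu) * x) := by
  have hlm : 0 < lam + mu := by linarith
  set A := Real.exp (-lam * (x + e)) with hA
  set B := Real.exp (-2 * lam * x) with hB
  set F : ℝ → ℝ := fun q' =>
    (if q' ≤ e then A else if q' < x then Real.exp (-lam * (x + q')) else B)
      * (mu * Real.exp (-mu * q')) with hF
  -- integrability of F on Ioi 0 (and subsets)
  have hFint : IntegrableOn F (Set.Ioi 0) := by
    have hg : IntegrableOn (fun q' => mu * Real.exp (-mu * q')) (Set.Ioi (0:ℝ)) :=
      (exp_neg_integrableOn_Ioi 0 hmu).const_mul mu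
    have hmeas : AEStronglyMeasurable F (volume.restrict (Set.Ioi (0:ℝ))) := by
      apply Measurable.aestronglyMeasurable
      apply Measurable.mul _ (by fun_prop)
      apply Measurable.ite (measurableSet_le measurable_id measurable_const)
        measurable_const
      exact Measurable.ite (measurableSet_lt measurable_id measurable_const)
        (by fun_prop) measurable_const
    refine hg.integrable.mono hmeas ?_
    filter_upwards [ae_restrict_mem measurableSet_Ioi] with q' hq'
    rw [Real.norm_eq_abs, Real.norm_eq_abs, hF]
    have hpos : 0 < mu * Real.exp (-mu * q') := by positivity
    rw [abs_of_pos hpos, abs_mul, abs_of_pos hpos]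
    have hb : |if q' ≤ e then A else if q' < x then Real.exp (-lam * (x + q')) else B| ≤ 1 := by
      have hq0 : (0:ℝ) < q' := hq'
      split_ifs with h1 h2
      · rw [abs_of_pos (Real.exp_pos _)]
        exact Real.exp_le_one_iff.2 (by nlinarith)
      · rw [abs_of_pos (Real.exp_pos _)]
        exact Real.exp_le_one_iff.2 (by nlinarith)
      · rw [abs_of_pos (Real.exp_pos _)]
        exact Real.exp_le_one_iff.2 (by nlinarith)
    nlinarith [hpos]
  -- compute J := ∫ F
  have hsplit1 : Set.Ioc (0:ℝ) e ∪ Set.Ioi e = Set.Ioi 0 := Set.Ioc_union_Ioi_eq_Ioi he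
  have hsplit2 : Set.Ioc e x ∪ Set.Ioi x = Set.Ioi e := Set.Ioc_union_Ioi_eq_Ioi hex
  have hJ : ∫ q' in Set.Ioi (0:ℝ), F q'
      = A * mu * ((Real.exp (-mu * 0) - Real.exp (-mu * e)) / mu)
        + mu * Real.exp (-lam * x)
          * ((Real.exp (-(lam+mu) * e) - Real.exp (-(lam+mu) * x)) / (lam+mu))
        + B * mu * (Real.exp (-mu * x) / mu) := by
    rw [← hsplit1, setIntegral_union (Set.Ioc_disjoint_Ioi le_rfl) measurableSet_Ioi
        (hFint.mono_set Set.Ioc_subset_Ioi_self)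
        (hFint.mono_set (Set.Ioi_subset_Ioi he)),
      ← hsplit2, setIntegral_union (Set.Ioc_disjoint_Ioi le_rfl) measurableSet_Ioi
        (hFint.mono_set (fun z hz => lt_of_le_of_lt he hz.1))
        (hFint.mono_set (Set.Ioi_subset_Ioi hx))]
    have e1 : ∫ q' in Set.Ioc (0:ℝ) e, F q'
        = ∫ q' in Set.Ioc (0:ℝ) e, (A * mu) * Real.exp (-mu * q') := by
      apply setIntegral_congr_fun measurableSet_Ioc
      intro q' hq'
      rw [hF]
      simp only [if_pos hq'.2]
      ring
    have e2 : ∫ q' in Set.Ioc e x, F q'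
        = ∫ q' in Set.Ioc e x, (mu * Real.exp (-lam * x)) * Real.exp (-(lam+mu) * q') := by
      apply setIntegral_congr_fun measurableSet_Ioc
      intro q' hq'
      rw [hF]
      simp only [if_neg (not_le.2 hq'.1)]
      rcases lt_or_eq_of_le hq'.2 with hlt | heq
      · rw [if_pos hlt, show -lam * (x + q') = -lam * x + -(lam * q') by ring,
          Real.exp_add, show -(lam+mu) * q' = -(lam * q') + -mu * q' by ring, Real.exp_add]
        ring
      · rw [if_neg (by rw [heq]; exact lt_irrefl x), hB, heq,
          show -2 * lam * x = -lam * x + -(lam * x) by ring, Real.exp_add,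
          show -(lam+mu) * x = -(lam * x) + -mu * x by ring, Real.exp_add]
        ring
    have e3 : ∫ q' in Set.Ioi x, F q'
        = ∫ q' in Set.Ioi x, (B * mu) * Real.exp (-mu * q') := by
      apply setIntegral_congr_fun measurableSet_Ioi
      intro q' hq'
      rw [hF]
      simp only [if_neg (not_le.2 (lt_of_le_of_lt hex hq')), if_neg (not_lt.2 (le_of_lt (show x < q' from hq')))]
      ring
    rw [e1, e2, e3, MeasureTheory.integral_const_mul, MeasureTheory.integral_const_mul,
      MeasureTheory.integral_const_mul,
      expIoc mu hmu 0 e he, expIoc (lam+mu) hlm e x hex, expIoi mu hmu x]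
    ring
  -- reduce outer integral
  have hout : (∫ q in Set.Ioi (0:ℝ), ∫ q' in Set.Ioi (0:ℝ),
      (if q ≤ x then (0:ℝ)
       else if q' ≤ e then Real.exp (-lam * (x + e))
       else if q' < x then Real.exp (-lam * (x + q'))
       else Real.exp (-2 * lam * x))
      * (mu * Real.exp (-mu * q)) * (mu * Real.exp (-mu * q')))
      = ∫ q in Set.Ioi (0:ℝ),
        (if q ≤ x then (0:ℝ)
         else ((∫ q' in Set.Ioi (0:ℝ), F q') * mu) * Real.exp (-mu * q)) := by
    apply setIntegral_congr_fun measurableSet_Ioi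
    intro q _
    by_cases hq : q ≤ x
    · simp [hq]
    · simp only [if_neg hq]
      have hrw : ∀ q' : ℝ,
          (if q' ≤ e then Real.exp (-lam * (x + e))
           else if q' < x then Real.exp (-lam * (x + q'))
           else Real.exp (-2 * lam * x))
          * (mu * Real.exp (-mu * q)) * (mu * Real.exp (-mu * q'))
          = F q' * (mu * Real.exp (-mu * q)) := by
        intro q'; rw [hF, hA, hB]; ring
      simp only [hrw]
      rw [integral_mul_const]
      ring
  rw [hout]
  set J := ∫ q' in Set.Ioi (0:ℝ), F q' with hJdef
  have hsplit3 : Set.Ioc (0:ℝ) x ∪ Set.Ioi x = Set.Ioi 0 := Set.Ioc_union_Ioi_eq_Ioi hx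
  have hint1 : IntegrableOn (fun q => if q ≤ x then (0:ℝ) else (J * mu) * Real.exp (-mu * q))
      (Set.Ioc (0:ℝ) x) := by
    apply IntegrableOn.congr_fun (f := fun _ => (0:ℝ))
    · simp
    · intro q hq; simp [hq.2]
    · exact measurableSet_Ioc
  have hint2 : IntegrableOn (fun q => if q ≤ x then (0:ℝ) else (J * mu) * Real.exp (-mu * q))
      (Set.Ioi x) := by
    apply IntegrableOn.congr_fun (f := fun q => (J * mu) * Real.exp (-mu * q))
    · exact (exp_neg_integrableOn_Ioi x hmu).const_mul _
    · intro q hq; simp only [if_neg (not_le.2 (show x < q from hq))]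
    · exact measurableSet_Ioi
  rw [← hsplit3, setIntegral_union (Set.Ioc_disjoint_Ioi le_rfl) measurableSet_Ioi hint1 hint2]
  have o1 : ∫ q in Set.Ioc (0:ℝ) x,
      (if q ≤ x then (0:ℝ) else (J * mu) * Real.exp (-mu * q)) = 0 := by
    rw [setIntegral_congr_fun measurableSet_Ioc (g := fun _ => (0:ℝ))
      (fun q hq => by simp [hq.2])]
    simp
  have o2 : ∫ q in Set.Ioi x,
      (if q ≤ x then (0:ℝ) else (J * mu) * Real.exp (-mu * q))
      = (J * mu) * (Real.exp (-mu * x) / mu) := by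
    rw [setIntegral_congr_fun measurableSet_Ioi (g := fun q => (J * mu) * Real.exp (-mu * q))
      (fun q hq => by simp only [if_neg (not_le.2 (show x < q from hq))]), MeasureTheory.integral_const_mul,
      expIoi mu hmu x]
  rw [o1, o2, hJ]
  -- final algebra
  rw [hA, hB]
  have r1 : Real.exp (-lam * (x + e)) = Real.exp (-(lam*x)) * Real.exp (-(lam*e)) := by
    rw [← Real.exp_add]; congr 1; ring
  have r2 : Real.exp (-(lam+mu) * e) = Real.exp (-(lam*e)) * Real.exp (-(mu*e)) := by
    rw [← Real.exp_add]; congr 1; ring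
  have r3 : Real.exp (-(lam+mu) * x) = Real.exp (-(lam*x)) * Real.exp (-(mu*x)) := by
    rw [← Real.exp_add]; congr 1; ring
  have r4 : Real.exp (-2 * lam * x) = Real.exp (-(lam*x)) * Real.exp (-(lam*x)) := by
    rw [← Real.exp_add]; congr 1; ring
  have r5 : Real.exp (-lam * (e + x) - mu * x)
      = Real.exp (-(lam*e)) * Real.exp (-(lam*x)) * Real.exp (-(mu*x)) := by
    rw [← Real.exp_add, ← Real.exp_add]; congr 1; ring
  have r6 : Real.exp (-2 * (lam+mu) * x)
      = Real.exp (-(lam*x)) * Real.exp (-(mu*x)) * (Real.exp (-(lam*x)) * Real.exp (-(mu*x))) := by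
    rw [← Real.exp_add, ← Real.exp_add]; congr 1; ring
  have r7 : Real.exp (-mu * 0) = 1 := by norm_num
  have r8 : Real.exp (-lam * x) = Real.exp (-(lam*x)) := by congr 1; ring
  have r9 : Real.exp (-mu * x) = Real.exp (-(mu*x)) := by congr 1; ring
  have r10 : Real.exp (-mu * e) = Real.exp (-(mu*e)) := by congr 1; ring
  rw [r1, r2, r3, r4, r5, r6, r7, r8, r9, r10]
  field_simp
  ring
end

section
/- Let λ, μ > 0, let x ≥ 0 and let e′ be a real number with e′ ≥ x. Define h : [0,∞) × [0,∞) → ℝ by h(q,q′) = 0 if q > x, and, for q ≤ x: h(q,q′) = exp(−2λx) if q′ < x; h(q,q′) = exp(−λ(x+q′)) if x ≤ q′ ≤ e′; h(q,q′) = exp(−λ(x+e′)) if q′ > e′. Then ∫₀^∞ ∫₀^∞ h(q,q′) · μe^{−μq} · μe^{−μq′} dq′ dq = (μ/(λ+μ)) e^{−λx}(1 − e^{−μx})(e^{−(λ+μ)x} − e^{−(λ+μ)e′}) + e^{−λx} e^{−(λ+μ)e′}(1 − e^{−μx}) + e^{−2λx}(1 − e^{−μx})². -/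
open MeasureTheory Real Set

lemma exp_Ioi (c a : ℝ) (hc : 0 < c) :
    ∫ t in Set.Ioi a, Real.exp (-(c * t)) = Real.exp (-(c * a)) / c := by
  have := integral_comp_mul_left_Ioi (fun y => Real.exp (-y)) a hc
  simp only [smul_eq_mul] at this
  rw [this, integral_exp_neg_Ioi]
  ring

lemma exp_intval (c a b : ℝ) (hc : c ≠ 0) :
    ∫ t in a..b, Real.exp (c * t) = (Real.exp (c * b) - Real.exp (c * a)) / c := by
  have := intervalIntegral.integral_comp_mul_left (fun y => Real.exp y) hc (a := a) (b := b)
  simp only [smul_eq_mul] at this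
  rw [this, integral_exp]
  field_simp

section main
variable (lam mu x e' : ℝ)

noncomputable def F : ℝ → ℝ := fun q' =>
  if q' < x then Real.exp (-2 * lam * x)
  else if q' ≤ e' then Real.exp (-lam * (x + q'))
  else Real.exp (-lam * (x + e'))

lemma inner_val (hlam : 0 < lam) (hmu : 0 < mu) (hx : 0 ≤ x) (he' : x ≤ e') :
    ∫ q' in Set.Ioi (0:ℝ), F lam x e' q' * (mu * Real.exp (-mu * q'))
    = Real.exp (-2*lam*x) * (1 - Real.exp (-mu*x))
      + Real.exp (-lam*x) * mu * ((Real.exp (-(lam+mu)*x) - Real.exp (-(lam+mu)*e'))/(lam+mu))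
      + Real.exp (-lam*(x+e')) * Real.exp (-(mu*e')) := by
  have he0 : (0:ℝ) ≤ e' := hx.trans he'
  set f : ℝ → ℝ := fun q' => F lam x e' q' * (mu * Real.exp (-mu * q')) with hf
  -- equalities on pieces
  have eq1 : EqOn (fun t => Real.exp (-2*lam*x) * (mu * Real.exp (-mu * t))) f (Ioc 0 x) := by
    intro t ht
    rcases lt_or_eq_of_le ht.2 with h | h
    · simp [hf, F, h]
    · simp only [hf, F, h, lt_irrefl, if_false, le_refl, he', if_true]
      have : -lam * (x + x) = -2*lam*x := by ring
      rw [this]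
  have eq2 : EqOn (fun t => Real.exp (-lam*x) * mu * Real.exp (-(lam+mu) * t)) f (Ioc x e') := by
    intro t ht
    have h1 : ¬ t < x := not_lt.2 ht.1.le
    simp only [hf, F, h1, if_false, ht.2, if_true]
    have h3 : Real.exp (-lam*x) * Real.exp (-(lam+mu)*t)
        = Real.exp (-lam*(x+t)) * Real.exp (-mu*t) := by
      rw [← Real.exp_add, ← Real.exp_add]; ring_nf
    linear_combination mu * h3
  have eq3 : EqOn (fun t => Real.exp (-lam*(x+e')) * (mu * Real.exp (-mu * t))) f (Ioi e') := by
    intro t ht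
    have h1 : ¬ t < x := not_lt.2 (he'.trans (le_of_lt ht))
    have h2 : ¬ t ≤ e' := not_le.2 ht
    simp [hf, F, h1, h2]
  -- integrability
  have i1 : IntegrableOn f (Ioc 0 x) := by
    refine IntegrableOn.congr_fun ?_ eq1 measurableSet_Ioc
    exact (Continuous.integrableOn_Ioc (by continuity))
  have i2 : IntegrableOn f (Ioc x e') := by
    refine IntegrableOn.congr_fun ?_ eq2 measurableSet_Ioc
    exact (Continuous.integrableOn_Ioc (by continuity))
  have i3 : IntegrableOn f (Ioi e') := by
    refine IntegrableOn.congr_fun ?_ eq3 measurableSet_Ioi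
    exact ((exp_neg_integrableOn_Ioi e' hmu).const_mul mu).const_mul _
  -- split the domain
  have hsplit : Ioi (0:ℝ) = Ioc 0 x ∪ Ioc x e' ∪ Ioi e' := by
    rw [Set.Ioc_union_Ioc_eq_Ioc hx he', Set.Ioc_union_Ioi_eq_Ioi he0]
  rw [show Ioi (0:ℝ) = Ioc 0 x ∪ Ioc x e' ∪ Ioi e' from hsplit]
  rw [setIntegral_union (by
        rw [Set.Ioc_union_Ioc_eq_Ioc hx he']
        exact Set.Ioc_disjoint_Ioi le_rfl) measurableSet_Ioi (i1.union i2) i3,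
      setIntegral_union (by
        simp only [Set.disjoint_left, mem_Ioc, not_and, mem_Ioc]
        exact fun a ha hlt => absurd hlt (not_lt.2 ha.2)) measurableSet_Ioc i1 i2]
  have v1 : ∫ t in Ioc (0:ℝ) x, f t = Real.exp (-2*lam*x) * (1 - Real.exp (-mu*x)) := by
    rw [← setIntegral_congr_fun measurableSet_Ioc eq1, ← intervalIntegral.integral_of_le hx]
    simp only [neg_mul]
    rw [intervalIntegral.integral_const_mul]
    simp only [show ∀ t:ℝ, mu * Real.exp (-(mu*t)) = mu * Real.exp ((-mu)*t) by intro t; ring_nf]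
    rw [intervalIntegral.integral_const_mul, exp_intval _ _ _ (neg_ne_zero.2 hmu.ne')]
    field_simp [hmu.ne']
    ring_nf; rw [Real.exp_zero]; ring
  have v2 : ∫ t in Ioc x e', f t
      = Real.exp (-lam*x) * mu * ((Real.exp (-(lam+mu)*x) - Real.exp (-(lam+mu)*e'))/(lam+mu)) := by
    rw [← setIntegral_congr_fun measurableSet_Ioc eq2, ← intervalIntegral.integral_of_le he']
    rw [intervalIntegral.integral_const_mul, exp_intval _ _ _ (neg_ne_zero.2 (by positivity) : -(lam+mu) ≠ 0)]
    rw [div_neg]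
    ring
  have v3 : ∫ t in Ioi e', f t = Real.exp (-lam*(x+e')) * Real.exp (-(mu*e')) := by
    rw [← setIntegral_congr_fun measurableSet_Ioi eq3]
    rw [integral_const_mul, integral_const_mul]
    simp only [show ∀ t:ℝ, Real.exp (-mu*t) = Real.exp (-(mu*t)) by intro t; ring_nf]
    rw [exp_Ioi _ _ hmu]
    field_simp
  rw [v1, v2, v3]
end main

/-- Theorem 2 (computational core), 1D mmWave network: unconditioning the
conditional NLoS serving probability `g_N(x | q, q')` over the independent
`Exp(μ)` distances `q, q'` to the nearest blockages. -/
theorem stmt_1 (lam mu x e' : ℝ) (hlam : 0 < lam) (hmu : 0 < mu)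
    (hx : 0 ≤ x) (he' : x ≤ e') :
    (∫ q in Set.Ioi (0:ℝ), ∫ q' in Set.Ioi (0:ℝ),
      (if x < q then (0:ℝ)
       else if q' < x then Real.exp (-2 * lam * x)
       else if q' ≤ e' then Real.exp (-lam * (x + q'))
       else Real.exp (-lam * (x + e')))
      * (mu * Real.exp (-mu * q)) * (mu * Real.exp (-mu * q')))
    = mu / (lam + mu) * Real.exp (-lam * x) * (1 - Real.exp (-mu * x))
        * (Real.exp (-(lam + mu) * x) - Real.exp (-(lam + mu) * e'))
      + Real.exp (-lam * x) * Real.exp (-(lam + mu) * e') * (1 - Real.exp (-mu * x))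
      + Real.exp (-2 * lam * x) * (1 - Real.exp (-mu * x)) ^ 2 := by
  have hI := inner_val lam mu x e' hlam hmu hx he'
  set Ival : ℝ := Real.exp (-2*lam*x) * (1 - Real.exp (-mu*x))
      + Real.exp (-lam*x) * mu * ((Real.exp (-(lam+mu)*x) - Real.exp (-(lam+mu)*e'))/(lam+mu))
      + Real.exp (-lam*(x+e')) * Real.exp (-(mu*e')) with hIv
  have step1 : ∀ q : ℝ,
      (∫ q' in Set.Ioi (0:ℝ),
        (if x < q then (0:ℝ)
         else if q' < x then Real.exp (-2 * lam * x)
         else if q' ≤ e' then Real.exp (-lam * (x + q'))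
         else Real.exp (-lam * (x + e')))
        * (mu * Real.exp (-mu * q)) * (mu * Real.exp (-mu * q')))
      = ((if x < q then (0:ℝ) else 1) * (mu * Real.exp (-mu * q))) * Ival := by
    intro q
    have : ∀ q' : ℝ,
        (if x < q then (0:ℝ)
         else if q' < x then Real.exp (-2 * lam * x)
         else if q' ≤ e' then Real.exp (-lam * (x + q'))
         else Real.exp (-lam * (x + e')))
        * (mu * Real.exp (-mu * q)) * (mu * Real.exp (-mu * q'))
        = ((if x < q then (0:ℝ) else 1) * (mu * Real.exp (-mu * q)))
          * (F lam x e' q' * (mu * Real.exp (-mu * q'))) := by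
      intro q'
      simp only [F]
      split_ifs <;> ring
    simp only [this]
    rw [integral_const_mul, hI]
  simp only [step1]
  rw [integral_mul_const]
  have houter : (∫ q in Set.Ioi (0:ℝ), (if x < q then (0:ℝ) else 1) * (mu * Real.exp (-mu * q)))
      = 1 - Real.exp (-mu * x) := by
    have hsplit : Set.Ioi (0:ℝ) = Set.Ioc 0 x ∪ Set.Ioi x := (Set.Ioc_union_Ioi_eq_Ioi hx).symm
    set c : ℝ → ℝ := fun q => (if x < q then (0:ℝ) else 1) * (mu * Real.exp (-mu * q)) with hc
    have eqa : Set.EqOn (fun q => mu * Real.exp (-mu * q)) c (Set.Ioc 0 x) := by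
      intro q hq
      simp [hc, not_lt.2 hq.2]
    have eqb : Set.EqOn (fun _ : ℝ => (0:ℝ)) c (Set.Ioi x) := by
      intro q hq
      simp only [hc]
      rw [if_pos (Set.mem_Ioi.mp hq), zero_mul]
    have ia : IntegrableOn c (Set.Ioc 0 x) :=
      IntegrableOn.congr_fun (Continuous.integrableOn_Ioc (by fun_prop)) eqa measurableSet_Ioc
    have ib : IntegrableOn c (Set.Ioi x) :=
      IntegrableOn.congr_fun (integrableOn_zero) eqb measurableSet_Ioi
    rw [show Set.Ioi (0:ℝ) = Set.Ioc 0 x ∪ Set.Ioi x from hsplit,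
        setIntegral_union (Set.Ioc_disjoint_Ioi le_rfl) measurableSet_Ioi ia ib]
    have va : ∫ q in Set.Ioc (0:ℝ) x, c q = 1 - Real.exp (-mu * x) := by
      rw [← setIntegral_congr_fun measurableSet_Ioc eqa, ← intervalIntegral.integral_of_le hx]
      rw [intervalIntegral.integral_const_mul, exp_intval _ _ _ (neg_ne_zero.2 hmu.ne')]
      field_simp [hmu.ne']
      ring_nf; rw [Real.exp_zero]; ring
    have vb : ∫ q in Set.Ioi x, c q = 0 := by
      rw [← setIntegral_congr_fun measurableSet_Ioi eqb]
      simp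
    rw [va, vb, add_zero]
  rw [houter, hIv]
  have hE : Real.exp (-lam*(x+e')) * Real.exp (-(mu*e'))
      = Real.exp (-lam*x) * Real.exp (-(lam+mu)*e') := by
    rw [← Real.exp_add, ← Real.exp_add]; ring_nf
  rw [hE]
  ring
end

section
/- For all λ, μ > 0, 2λ ∫₀^∞ [ (μ/(λ+μ)) e^{−(λ+μ)x}(1 − e^{−(λ+μ)x}) + e^{−2(λ+μ)x} ] dx = (λ/μ)(2 + λ/μ)/(1 + λ/μ)² = 1 − 1/(1 + λ/μ)². -/
open MeasureTheory Real

lemma exp_int (b : ℝ) (hb : 0 < b) :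
    ∫ x in Set.Ioi (0:ℝ), Real.exp (-(b * x)) = 1 / b := by
  have h := integral_comp_mul_left_Ioi (fun x => Real.exp (-x)) 0 hb
  simp only [mul_zero] at h
  rw [integral_exp_neg_Ioi_zero] at h
  rw [h, smul_eq_mul, mul_one, one_div]

lemma integ (b : ℝ) (hb : 0 < b) :
    IntegrableOn (fun x => Real.exp (-(b * x))) (Set.Ioi (0:ℝ)) := by
  simpa [neg_mul] using exp_neg_integrableOn_Ioi 0 hb

/-- Corollary (1D LAP model): the LoS association probability
`A_L = 2λ∫₀^∞ g_L(x) dx` equals `(λ/μ)(2+λ/μ)/(1+λ/μ)² = 1 − 1/(1+λ/μ)²`. -/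
theorem stmt_2 (lam mu : ℝ) (hlam : 0 < lam) (hmu : 0 < mu) :
    (2 * lam * ∫ x in Set.Ioi (0:ℝ),
      (mu / (lam + mu) * Real.exp (-(lam + mu) * x) * (1 - Real.exp (-(lam + mu) * x))
        + Real.exp (-2 * (lam + mu) * x))
      = lam / mu * (2 + lam / mu) / (1 + lam / mu) ^ 2)
    ∧ lam / mu * (2 + lam / mu) / (1 + lam / mu) ^ 2
      = 1 - 1 / (1 + lam / mu) ^ 2 := by
  have ha : 0 < lam + mu := by linarith
  have h2a : 0 < 2 * (lam + mu) := by linarith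
  set a := lam + mu with ha'
  have hexp : ∀ x : ℝ, Real.exp (-a * x) * Real.exp (-a * x) = Real.exp (-(2*a*x)) := by
    intro x; rw [← Real.exp_add]; ring_nf
  have key : (∫ x in Set.Ioi (0:ℝ),
      (mu / a * Real.exp (-a * x) * (1 - Real.exp (-a * x)) + Real.exp (-2 * a * x)))
      = mu / a * (1/a) + (1 - mu / a) * (1/(2*a)) := by
    have e1 : ∀ x : ℝ, mu / a * Real.exp (-a * x) * (1 - Real.exp (-a * x)) + Real.exp (-2 * a * x)
        = mu / a * Real.exp (-(a * x)) + (1 - mu / a) * Real.exp (-(2*a * x)) := by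
      intro x
      have := hexp x
      rw [mul_sub, mul_one]
      rw [show (-2 * a * x) = -(2*a*x) by ring, show (-a*x) = -(a*x) by ring]
      rw [← this]
      ring_nf
    rw [integral_congr_ae (Filter.Eventually.of_forall fun x => e1 x)]
    rw [integral_add ((integ a ha).const_mul _) ((integ (2*a) h2a).const_mul _),
      MeasureTheory.integral_const_mul, MeasureTheory.integral_const_mul, exp_int a ha, exp_int (2*a) h2a]
  constructor
  · rw [key]
    field_simp
    rw [ha']
    ring_nf
  · field_simp
    ring
end

section
/- Let r₁, r₂ > 0 and let θ, δ be angles with 0 < θ < δ < π (so that sin θ > 0, sin δ > 0 and sin(δ−θ) > 0). Then the function φ : (0,∞) → ℝ defined by φ(l) = (l² sin δ · sin(δ−θ) / (2 sin θ)) · [ 1 − (1 − min(1, r₁ r₂ sin²θ / (l² sin δ · sin(δ−θ))))² ] is nondecreasing in l on (0,∞). -/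
open Real

lemma stmt_7_aux (K : ℝ) (hK : 0 < K) {u v : ℝ} (hu : 0 < u) (huv : u ≤ v) :
    u * (1 - (1 - min 1 (K / u)) ^ 2) ≤ v * (1 - (1 - min 1 (K / v)) ^ 2) := by
  have hv : 0 < v := lt_of_lt_of_le hu huv
  have key : ∀ t : ℝ, 0 < t → K ≤ t →
      t * (1 - (1 - min 1 (K / t)) ^ 2) = 2 * K - K ^ 2 / t := by
    intro t ht hKt
    have hm : min 1 (K / t) = K / t := min_eq_right (by rw [div_le_one ht]; exact hKt)
    rw [hm]; field_simp; ring
  have key2 : ∀ t : ℝ, 0 < t → t ≤ K → t * (1 - (1 - min 1 (K / t)) ^ 2) = t := by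
    intro t ht hKt
    have hm : min 1 (K / t) = 1 := min_eq_left (by rw [le_div_iff₀ ht]; linarith)
    rw [hm]; ring
  rcases le_total u K with h1 | h1
  · rcases le_total v K with h2 | h2
    · rw [key2 u hu h1, key2 v hv h2]; exact huv
    · rw [key2 u hu h1, key v hv h2]
      have h3 : K ^ 2 / v ≤ K := by rw [div_le_iff₀ hv]; nlinarith
      linarith
  · have h2 : K ≤ v := le_trans h1 huv
    rw [key u hu h1, key v hv h2]
    have h3 : K ^ 2 / v ≤ K ^ 2 / u := by gcongr
    linarith

/-- Monotonicity (in the blockage length `l`) of the overlap term of the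
parallelogram-union area `A(r₁,r₂,θ,l,δ)` of equation (40), case `δ > θ`. -/
theorem stmt_7 (r1 r2 θ δ : ℝ) (hr1 : 0 < r1) (hr2 : 0 < r2)
    (hθ : 0 < θ) (hθδ : θ < δ) (hδ : δ < π) :
    MonotoneOn (fun l : ℝ =>
      l ^ 2 * Real.sin δ * Real.sin (δ - θ) / (2 * Real.sin θ)
        * (1 - (1 - min 1 (r1 * r2 * Real.sin θ ^ 2
            / (l ^ 2 * Real.sin δ * Real.sin (δ - θ)))) ^ 2))
      (Set.Ioi 0) := by
  have hsθ : 0 < Real.sin θ := Real.sin_pos_of_pos_of_lt_pi hθ (lt_trans hθδ hδ)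
  have hsδ : 0 < Real.sin δ := Real.sin_pos_of_pos_of_lt_pi (lt_trans hθ hθδ) hδ
  have hsδθ : 0 < Real.sin (δ - θ) :=
    Real.sin_pos_of_pos_of_lt_pi (by linarith) (by linarith)
  have hK : 0 < r1 * r2 * Real.sin θ ^ 2 := by positivity
  intro x hx y hy hxy
  simp only [Set.mem_Ioi] at hx hy
  have hu : 0 < x ^ 2 * Real.sin δ * Real.sin (δ - θ) := by positivity
  have huv : x ^ 2 * Real.sin δ * Real.sin (δ - θ) ≤
      y ^ 2 * Real.sin δ * Real.sin (δ - θ) := by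
    gcongr
  have h := stmt_7_aux (r1 * r2 * Real.sin θ ^ 2) hK hu huv
  simp only [div_mul_eq_mul_div]
  exact div_le_div_of_nonneg_right h (by positivity) |>.trans_eq rfl
end

section
/- Let β, λ > 0, x > 0 and e′ ≥ x. For a measurable function p : (0,∞) × [0,2π] → [0,∞), define H[p] = (1 − e^{−βx}) · exp( −(λ/(1−e^{−βx})) [ ∫₀^{2π} ∫₀^{e′} (e^{−βt} − p(t,θ)) t dt dθ + ∫₀^{2π} ∫₀^{x} (1 − e^{−βx} − e^{−βt} + p(t,θ)) t dt dθ ] ). If p₁, p₂ are measurable, integrable against t dt dθ on (0,e′]×[0,2π], satisfy 0 ≤ p_i(t,θ) ≤ min(e^{−βx}, e^{−βt}), and p₁(t,θ) ≤ p₂(t,θ) for all (t,θ), then H[p₁] ≤ H[p₂]. -/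
open MeasureTheory Real

/-- Auxiliary: interval integrability of `t ↦ p t θ * t` on `[a,b] ⊆ [0,∞)`
for a bounded measurable `p`. -/
lemma aux_ii (β x : ℝ) (p : ℝ → ℝ → ℝ) (hm : Measurable (Function.uncurry p))
    (hb : ∀ t θ : ℝ, 0 ≤ p t θ ∧ p t θ ≤ min (Real.exp (-β * x)) (Real.exp (-β * t)))
    (hβ : 0 < β) (θ a b : ℝ) (ha : 0 ≤ a) (hab : a ≤ b) :
    IntervalIntegrable (fun t => p t θ * t) MeasureTheory.volume a b := by
  rw [intervalIntegrable_iff_integrableOn_Ioc_of_le hab]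
  have hmeas : Measurable fun t => p t θ * t := by
    have : Measurable fun t => p t θ :=
      hm.comp (measurable_id.prodMk measurable_const)
    exact this.mul measurable_id
  have hid : IntegrableOn (fun t : ℝ => t) (Set.Ioc a b) :=
    continuous_id.integrableOn_Ioc
  refine hid.mono' hmeas.aestronglyMeasurable ?_
  filter_upwards [MeasureTheory.ae_restrict_mem measurableSet_Ioc] with t ht
  have h0 : 0 < t := lt_of_le_of_lt ha ht.1
  have h1 : p t θ ≤ 1 := by
    have := (hb t θ).2
    have h2 : Real.exp (-β * t) ≤ 1 := by
      apply Real.exp_le_one_iff.mpr; nlinarith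
    exact le_trans this (le_trans (min_le_right _ _) h2)
  have h2 : 0 ≤ p t θ := (hb t θ).1
  rw [Real.norm_eq_abs, abs_of_nonneg (by positivity)]
  calc p t θ * t ≤ 1 * t := by nlinarith
    _ = t := one_mul t

/-- Lemma 9, first claim: the NLoS serving probability functional
`H[p] = (1−e^{−βx})·exp(−(λ/(1−e^{−βx}))[∫₀^{2π}∫₀^{e′}(e^{−βt} − p) t dt dθ
+ ∫₀^{2π}∫₀^{x}(1 − e^{−βx} − e^{−βt} + p) t dt dθ])` is monotone in the joint
LoS probability `p`. -/
theorem stmt_10 (β lam x e' : ℝ) (hβ : 0 < β) (hlam : 0 < lam) (hx : 0 < x)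
    (he' : x ≤ e')
    (p1 p2 : ℝ → ℝ → ℝ)
    (hm1 : Measurable (Function.uncurry p1))
    (hm2 : Measurable (Function.uncurry p2))
    (hb1 : ∀ t θ : ℝ, 0 ≤ p1 t θ ∧ p1 t θ ≤ min (Real.exp (-β * x)) (Real.exp (-β * t)))
    (hb2 : ∀ t θ : ℝ, 0 ≤ p2 t θ ∧ p2 t θ ≤ min (Real.exp (-β * x)) (Real.exp (-β * t)))
    (hi1 : IntegrableOn (fun q : ℝ × ℝ => p1 q.1 q.2 * q.1)
      (Set.Ioc 0 e' ×ˢ Set.Icc 0 (2 * π)))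
    (hi2 : IntegrableOn (fun q : ℝ × ℝ => p2 q.1 q.2 * q.1)
      (Set.Ioc 0 e' ×ˢ Set.Icc 0 (2 * π)))
    (hle : ∀ t θ : ℝ, p1 t θ ≤ p2 t θ) :
    (1 - Real.exp (-β * x)) * Real.exp (-(lam / (1 - Real.exp (-β * x))) *
        ((∫ θ in (0:ℝ)..(2 * π), ∫ t in (0:ℝ)..e',
            (Real.exp (-β * t) - p1 t θ) * t)
          + ∫ θ in (0:ℝ)..(2 * π), ∫ t in (0:ℝ)..x,
            (1 - Real.exp (-β * x) - Real.exp (-β * t) + p1 t θ) * t))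
    ≤ (1 - Real.exp (-β * x)) * Real.exp (-(lam / (1 - Real.exp (-β * x))) *
        ((∫ θ in (0:ℝ)..(2 * π), ∫ t in (0:ℝ)..e',
            (Real.exp (-β * t) - p2 t θ) * t)
          + ∫ θ in (0:ℝ)..(2 * π), ∫ t in (0:ℝ)..x,
            (1 - Real.exp (-β * x) - Real.exp (-β * t) + p2 t θ) * t)) := by
  have hx0e : (0:ℝ) ≤ e' := le_trans hx.le he'
  have hπ : (0:ℝ) ≤ 2 * π := by positivity
  have hex : Real.exp (-β * x) < 1 := by
    apply Real.exp_lt_one_iff.mpr; nlinarith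
  have hpos : 0 < 1 - Real.exp (-β * x) := by linarith
  have hc : 0 < lam / (1 - Real.exp (-β * x)) := div_pos hlam hpos
  -- continuous pieces
  have hcont1 : ∀ b : ℝ, IntervalIntegrable (fun t => Real.exp (-β * t) * t)
      MeasureTheory.volume 0 b := fun b =>
    (Continuous.mul (by continuity) continuous_id).intervalIntegrable 0 b
  have hcont2 : IntervalIntegrable
      (fun t => (1 - Real.exp (-β * x) - Real.exp (-β * t)) * t)
      MeasureTheory.volume 0 x :=
    (Continuous.mul (by continuity) continuous_id).intervalIntegrable 0 x
  -- inner integral decompositions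
  have hsplit1 : ∀ (p : ℝ → ℝ → ℝ), Measurable (Function.uncurry p) →
      (∀ t θ : ℝ, 0 ≤ p t θ ∧ p t θ ≤ min (Real.exp (-β * x)) (Real.exp (-β * t))) →
      ∀ θ : ℝ, (∫ t in (0:ℝ)..e', (Real.exp (-β * t) - p t θ) * t)
        = (∫ t in (0:ℝ)..e', Real.exp (-β * t) * t) - ∫ t in (0:ℝ)..e', p t θ * t := by
    intro p hm hb θ
    rw [← intervalIntegral.integral_sub (hcont1 e') (aux_ii β x p hm hb hβ θ 0 e' le_rfl hx0e)]
    congr 1; funext t; ring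
  have hsplit2 : ∀ (p : ℝ → ℝ → ℝ), Measurable (Function.uncurry p) →
      (∀ t θ : ℝ, 0 ≤ p t θ ∧ p t θ ≤ min (Real.exp (-β * x)) (Real.exp (-β * t))) →
      ∀ θ : ℝ, (∫ t in (0:ℝ)..x, (1 - Real.exp (-β * x) - Real.exp (-β * t) + p t θ) * t)
        = (∫ t in (0:ℝ)..x, (1 - Real.exp (-β * x) - Real.exp (-β * t)) * t)
            + ∫ t in (0:ℝ)..x, p t θ * t := by
    intro p hm hb θ
    rw [← intervalIntegral.integral_add hcont2 (aux_ii β x p hm hb hβ θ 0 x le_rfl hx.le)]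
    congr 1; funext t; ring
  -- integrability in θ of inner integrals, via Fubini
  have key : ∀ (p : ℝ → ℝ → ℝ),
      IntegrableOn (fun q : ℝ × ℝ => p q.1 q.2 * q.1)
        (Set.Ioc 0 e' ×ˢ Set.Icc 0 (2 * π)) →
      ∀ b : ℝ, 0 < b → b ≤ e' →
      IntervalIntegrable (fun θ => ∫ t in (0:ℝ)..b, p t θ * t)
        MeasureTheory.volume 0 (2 * π) := by
    intro p hi b hb0 hbe
    have hsub : IntegrableOn (fun q : ℝ × ℝ => p q.1 q.2 * q.1)
        (Set.Ioc 0 b ×ˢ Set.Icc 0 (2 * π)) :=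
      hi.mono_set (Set.prod_mono (Set.Ioc_subset_Ioc le_rfl hbe) le_rfl)
    rw [IntegrableOn, MeasureTheory.Measure.volume_eq_prod,
      ← MeasureTheory.Measure.prod_restrict] at hsub
    have := hsub.integral_prod_right
    rw [intervalIntegrable_iff_integrableOn_Ioc_of_le hπ]
    have h2 : IntegrableOn
        (fun θ => ∫ t in Set.Ioc (0:ℝ) b, p t θ * t) (Set.Icc 0 (2 * π)) := this
    have h3 := h2.mono_set Set.Ioc_subset_Icc_self
    refine h3.congr_fun ?_ measurableSet_Ioc
    intro θ _
    show (∫ t in Set.Ioc (0:ℝ) b, p t θ * t) = ∫ t in (0:ℝ)..b, p t θ * t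
    rw [intervalIntegral.integral_of_le hb0.le]
  have hIG1 := key p1 hi1 e' (lt_of_lt_of_le hx he') le_rfl
  have hIG2 := key p2 hi2 e' (lt_of_lt_of_le hx he') le_rfl
  have hIH1 := key p1 hi1 x hx he'
  have hIH2 := key p2 hi2 x hx he'
  -- integrability of the (rewritten) inner integrals as functions of θ
  have hG : ∀ (p : ℝ → ℝ → ℝ),
      IntervalIntegrable (fun θ => ∫ t in (0:ℝ)..e', p t θ * t)
        MeasureTheory.volume 0 (2 * π) →
      IntervalIntegrable
        (fun θ => (∫ t in (0:ℝ)..e', Real.exp (-β * t) * t) - ∫ t in (0:ℝ)..e', p t θ * t)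
        MeasureTheory.volume 0 (2 * π) := fun p h =>
    (intervalIntegrable_const).sub h
  have hH : ∀ (p : ℝ → ℝ → ℝ),
      IntervalIntegrable (fun θ => ∫ t in (0:ℝ)..x, p t θ * t)
        MeasureTheory.volume 0 (2 * π) →
      IntervalIntegrable
        (fun θ => (∫ t in (0:ℝ)..x, (1 - Real.exp (-β * x) - Real.exp (-β * t)) * t)
          + ∫ t in (0:ℝ)..x, p t θ * t)
        MeasureTheory.volume 0 (2 * π) := fun p h =>
    (intervalIntegrable_const).add h
  -- main inequality between the bracketed sums
  have hS :
      ((∫ θ in (0:ℝ)..(2 * π), ∫ t in (0:ℝ)..e', (Real.exp (-β * t) - p2 t θ) * t)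
        + ∫ θ in (0:ℝ)..(2 * π), ∫ t in (0:ℝ)..x,
            (1 - Real.exp (-β * x) - Real.exp (-β * t) + p2 t θ) * t)
      ≤ ((∫ θ in (0:ℝ)..(2 * π), ∫ t in (0:ℝ)..e', (Real.exp (-β * t) - p1 t θ) * t)
        + ∫ θ in (0:ℝ)..(2 * π), ∫ t in (0:ℝ)..x,
            (1 - Real.exp (-β * x) - Real.exp (-β * t) + p1 t θ) * t) := by
    have e1 : ∀ θ : ℝ, (∫ t in (0:ℝ)..e', (Real.exp (-β * t) - p1 t θ) * t)
        = (∫ t in (0:ℝ)..e', Real.exp (-β * t) * t) - ∫ t in (0:ℝ)..e', p1 t θ * t :=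
      hsplit1 p1 hm1 hb1
    have e2 := hsplit1 p2 hm2 hb2
    have e3 := hsplit2 p1 hm1 hb1
    have e4 := hsplit2 p2 hm2 hb2
    rw [intervalIntegral.integral_congr (fun θ _ => e1 θ),
      intervalIntegral.integral_congr (fun θ _ => e2 θ),
      intervalIntegral.integral_congr (fun θ _ => e3 θ),
      intervalIntegral.integral_congr (fun θ _ => e4 θ),
      ← intervalIntegral.integral_add (hG p1 hIG1) (hH p1 hIH1),
      ← intervalIntegral.integral_add (hG p2 hIG2) (hH p2 hIH2)]
    apply intervalIntegral.integral_mono_on hπ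
      ((hG p2 hIG2).add (hH p2 hIH2)) ((hG p1 hIG1).add (hH p1 hIH1))
    intro θ _
    -- reduce to: ∫₀^x p2 - ∫₀^e' p2 ≤ ∫₀^x p1 - ∫₀^e' p1
    have hadj : ∀ (p : ℝ → ℝ → ℝ), Measurable (Function.uncurry p) →
        (∀ t θ : ℝ, 0 ≤ p t θ ∧ p t θ ≤ min (Real.exp (-β * x)) (Real.exp (-β * t))) →
        (∫ t in (0:ℝ)..x, p t θ * t) + (∫ t in x..e', p t θ * t)
          = ∫ t in (0:ℝ)..e', p t θ * t := fun p hm hb =>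
      intervalIntegral.integral_add_adjacent_intervals
        (aux_ii β x p hm hb hβ θ 0 x le_rfl hx.le)
        (aux_ii β x p hm hb hβ θ x e' hx.le he')
    have h1 := hadj p1 hm1 hb1
    have h2 := hadj p2 hm2 hb2
    have hmono : (∫ t in x..e', p1 t θ * t) ≤ ∫ t in x..e', p2 t θ * t := by
      apply intervalIntegral.integral_mono_on he'
        (aux_ii β x p1 hm1 hb1 hβ θ x e' hx.le he')
        (aux_ii β x p2 hm2 hb2 hβ θ x e' hx.le he')
      intro t ht
      have ht0 : 0 ≤ t := le_trans hx.le ht.1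
      nlinarith [hle t θ]
    linarith
  have := Real.exp_le_exp.mpr
    (mul_le_mul_of_nonpos_left hS (by linarith : -(lam / (1 - Real.exp (-β * x))) ≤ 0))
  exact mul_le_mul_of_nonneg_left this hpos.le
end

section
/- Let m = 1/1.38 (i.e., m = 50/69). For all β > 0 and r ≥ 0, 4 ∫₀^r ∫₀^{π/2} t e^{−βt sin²θ} dθ dt ≥ (4/(m²β²)) · ( mβr − (2/π)(1 − e^{−mβrπ/2}) ). Consequently, e^{−βr} exp(−4λ∫₀^r∫₀^{π/2} t e^{−βt sin²θ} dθ dt) ≤ exp( −βr − (4λ/(m²β²))( mβr − (2/π)(1 − e^{−mβrπ/2}) ) ) for every λ > 0. -/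
open MeasureTheory Real


open Set in

private lemma nonneg_of_deriv (F f : ℝ → ℝ) (hd : ∀ t, HasDerivAt F (f t) t)
    (h0 : F 0 = 0) (hf : ∀ t, 0 < t → 0 ≤ f t) : ∀ x, 0 ≤ x → 0 ≤ F x := by
  intro x hx
  have mono : MonotoneOn F (Ici 0) := by
    apply monotoneOn_of_deriv_nonneg (convex_Ici 0)
    · exact fun t _ => (hd t).continuousAt.continuousWithinAt
    · exact fun t _ => ((hd t).differentiableAt).differentiableWithinAt
    · intro t ht
      rw [interior_Ici] at ht
      rw [(hd t).deriv]
      exact hf t ht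
  have := mono self_mem_Ici (mem_Ici.2 hx) hx
  linarith [h0 ▸ this]

private lemma pow_deriv (n : ℕ) (t : ℝ) :
    HasDerivAt (fun y : ℝ => y^n) ((n:ℝ)*t^(n-1)) t := by simpa using hasDerivAt_pow n t

private lemma sin_ge_poly3 (x : ℝ) (hx : 0 ≤ x) : x - x^3/6 ≤ Real.sin x := by
  have hd : ∀ t : ℝ, HasDerivAt (fun y => Real.sin y - y + y^3/6)
      (Real.cos t - 1 + t^2/2) t := by
    intro t
    have h1 := Real.hasDerivAt_sin t
    have h2 : HasDerivAt (fun y : ℝ => y) 1 t := hasDerivAt_id t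
    convert (h1.sub h2).add ((pow_deriv 3 t).div_const 6) using 1
    · rfl
    · rfl
    · funext y; simp
    · norm_num; ring
  have := nonneg_of_deriv _ _ hd (by norm_num)
    (fun t _ => by nlinarith [Real.one_sub_sq_div_two_le_cos (x := t)]) x hx
  linarith

private lemma cos_le_poly4 (x : ℝ) (hx : 0 ≤ x) : Real.cos x ≤ 1 - x^2/2 + x^4/24 := by
  have hd : ∀ t : ℝ, HasDerivAt (fun y => 1 - y^2/2 + y^4/24 - Real.cos y)
      (-t + t^3/6 + Real.sin t) t := by
    intro t
    have h1 := Real.hasDerivAt_cos t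
    have h4 : HasDerivAt (fun y : ℝ => (1:ℝ)) 0 t := hasDerivAt_const t 1
    convert ((h4.sub ((pow_deriv 2 t).div_const 2)).add ((pow_deriv 4 t).div_const 24)).sub h1
      using 1
    · rfl
    · rfl
    · funext y; simp
    · norm_num; ring
  have := nonneg_of_deriv _ _ hd (by norm_num)
    (fun t ht => by nlinarith [sin_ge_poly3 t ht.le]) x hx
  linarith

private lemma sin_le_poly5 (x : ℝ) (hx : 0 ≤ x) : Real.sin x ≤ x - x^3/6 + x^5/120 := by
  have hd : ∀ t : ℝ, HasDerivAt (fun y => y - y^3/6 + y^5/120 - Real.sin y)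
      (1 - t^2/2 + t^4/24 - Real.cos t) t := by
    intro t
    have h1 := Real.hasDerivAt_sin t
    have h2 : HasDerivAt (fun y : ℝ => y) 1 t := hasDerivAt_id t
    convert ((h2.sub ((pow_deriv 3 t).div_const 6)).add ((pow_deriv 5 t).div_const 120)).sub h1
      using 1
    · rfl
    · rfl
    · funext y; simp
    · norm_num; ring
  have := nonneg_of_deriv _ _ hd (by norm_num)
    (fun t ht => by nlinarith [cos_le_poly4 t ht.le]) x hx
  linarith

private lemma cos_ge_poly6 (x : ℝ) (hx : 0 ≤ x) :
    1 - x^2/2 + x^4/24 - x^6/720 ≤ Real.cos x := by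
  have hd : ∀ t : ℝ, HasDerivAt (fun y => Real.cos y - 1 + y^2/2 - y^4/24 + y^6/720)
      (-Real.sin t + t - t^3/6 + t^5/120) t := by
    intro t
    have h1 := Real.hasDerivAt_cos t
    have h4 : HasDerivAt (fun y : ℝ => (1:ℝ)) 0 t := hasDerivAt_const t 1
    convert (((h1.sub h4).add ((pow_deriv 2 t).div_const 2)).sub
      ((pow_deriv 4 t).div_const 24)).add ((pow_deriv 6 t).div_const 720) using 1
    · rfl
    · rfl
    · funext y; simp
    · norm_num; ring
  have := nonneg_of_deriv _ _ hd (by norm_num)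
    (fun t ht => by nlinarith [sin_le_poly5 t ht.le]) x hx
  linarith

private lemma sin_ge_poly7 (x : ℝ) (hx : 0 ≤ x) :
    x - x^3/6 + x^5/120 - x^7/5040 ≤ Real.sin x := by
  have hd : ∀ t : ℝ, HasDerivAt (fun y => Real.sin y - y + y^3/6 - y^5/120 + y^7/5040)
      (Real.cos t - 1 + t^2/2 - t^4/24 + t^6/720) t := by
    intro t
    have h1 := Real.hasDerivAt_sin t
    have h2 : HasDerivAt (fun y : ℝ => y) 1 t := hasDerivAt_id t
    convert (((h1.sub h2).add ((pow_deriv 3 t).div_const 6)).sub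
      ((pow_deriv 5 t).div_const 120)).add ((pow_deriv 7 t).div_const 5040) using 1
    · rfl
    · rfl
    · funext y; simp
    · norm_num; ring
  have := nonneg_of_deriv _ _ hd (by norm_num)
    (fun t ht => by nlinarith [cos_ge_poly6 t ht.le]) x hx
  linarith

private lemma cos_le_poly8 (x : ℝ) (hx : 0 ≤ x) :
    Real.cos x ≤ 1 - x^2/2 + x^4/24 - x^6/720 + x^8/40320 := by
  have hd : ∀ t : ℝ, HasDerivAt
      (fun y => 1 - y^2/2 + y^4/24 - y^6/720 + y^8/40320 - Real.cos y)
      (-t + t^3/6 - t^5/120 + t^7/5040 + Real.sin t) t := by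
    intro t
    have h1 := Real.hasDerivAt_cos t
    have h4 : HasDerivAt (fun y : ℝ => (1:ℝ)) 0 t := hasDerivAt_const t 1
    convert ((((h4.sub ((pow_deriv 2 t).div_const 2)).add ((pow_deriv 4 t).div_const 24)).sub
      ((pow_deriv 6 t).div_const 720)).add ((pow_deriv 8 t).div_const 40320)).sub h1 using 1
    · rfl
    · rfl
    · funext y; simp
    · norm_num; ring
  have := nonneg_of_deriv _ _ hd (by norm_num)
    (fun t ht => by nlinarith [sin_ge_poly7 t ht.le]) x hx
  linarith

private lemma sin_le_poly9 (x : ℝ) (hx : 0 ≤ x) :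
    Real.sin x ≤ x - x^3/6 + x^5/120 - x^7/5040 + x^9/362880 := by
  have hd : ∀ t : ℝ, HasDerivAt
      (fun y => y - y^3/6 + y^5/120 - y^7/5040 + y^9/362880 - Real.sin y)
      (1 - t^2/2 + t^4/24 - t^6/720 + t^8/40320 - Real.cos t) t := by
    intro t
    have h1 := Real.hasDerivAt_sin t
    have h2 : HasDerivAt (fun y : ℝ => y) 1 t := hasDerivAt_id t
    convert ((((h2.sub ((pow_deriv 3 t).div_const 6)).add ((pow_deriv 5 t).div_const 120)).sub
      ((pow_deriv 7 t).div_const 5040)).add ((pow_deriv 9 t).div_const 362880)).sub h1 using 1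
    · rfl
    · rfl
    · funext y; simp
    · norm_num; ring
  have := nonneg_of_deriv _ _ hd (by norm_num)
    (fun t ht => by nlinarith [cos_le_poly8 t ht.le]) x hx
  linarith

private lemma cos_ge_poly10 (x : ℝ) (hx : 0 ≤ x) :
    1 - x^2/2 + x^4/24 - x^6/720 + x^8/40320 - x^10/3628800 ≤ Real.cos x := by
  have hd : ∀ t : ℝ, HasDerivAt
      (fun y => Real.cos y - 1 + y^2/2 - y^4/24 + y^6/720 - y^8/40320 + y^10/3628800)
      (-Real.sin t + t - t^3/6 + t^5/120 - t^7/5040 + t^9/362880) t := by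
    intro t
    have h1 := Real.hasDerivAt_cos t
    have h4 : HasDerivAt (fun y : ℝ => (1:ℝ)) 0 t := hasDerivAt_const t 1
    convert ((((((h1.sub h4).add ((pow_deriv 2 t).div_const 2)).sub
      ((pow_deriv 4 t).div_const 24)).add ((pow_deriv 6 t).div_const 720)).sub
      ((pow_deriv 8 t).div_const 40320)).add ((pow_deriv 10 t).div_const 3628800)) using 1
    · rfl
    · rfl
    · funext y; simp
    · norm_num; ring
  have := nonneg_of_deriv _ _ hd (by norm_num)
    (fun t ht => by nlinarith [sin_le_poly9 t ht.le]) x hx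
  linarith
private lemma p_certificate (x : ℝ) (hx : 0 ≤ x) (hx' : x ≤ 3.15) :
    0 ≤ 50/69 - x/2 + x^3/24 - x^5/720 + x^7/40320 - x^9/3628800 := by
  have hg : 0 ≤ (52724303768478823256748049146060738488710845766291014983/395507812500000000000000000000000000000000000000000000000 : ℝ) + (19820079712616324993841743471312749456443087124313/885937500000000000000000000000000000000000000000000 : ℝ) * x^1 + (-31497734102548050073588377559097051178799/5906250000000000000000000000000000000000000 : ℝ) * x^2 + (-290630896482905565584724943517761/283500000000000000000000000000000000 : ℝ) * x^3 + (1441298379905850445727921/14175000000000000000000000000 : ℝ) * x^4 + (15352630410532319/756000000000000000000 : ℝ) * x^5 + (-58286959/45360000000000 : ℝ) * x^6 + (-1/3628800 : ℝ) * x^7 := by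
    nlinarith [pow_le_pow_left₀ hx hx' 2, pow_le_pow_left₀ hx hx' 3,
      pow_le_pow_left₀ hx hx' 6, pow_le_pow_left₀ hx hx' 7,
      mul_nonneg hx (pow_nonneg hx 3), mul_nonneg hx (pow_nonneg hx 4),
      pow_nonneg hx 2, pow_nonneg hx 3, pow_nonneg hx 4, pow_nonneg hx 5]
  have key : 50/69 - x/2 + x^3/24 - x^5/720 + x^7/40320 - x^9/3628800
      = (x - (58286959/25000000 : ℝ))^2 * ((52724303768478823256748049146060738488710845766291014983/395507812500000000000000000000000000000000000000000000000 : ℝ) + (19820079712616324993841743471312749456443087124313/885937500000000000000000000000000000000000000000000 : ℝ) * x^1 + (-31497734102548050073588377559097051178799/5906250000000000000000000000000000000000000 : ℝ) * x^2 + (-290630896482905565584724943517761/283500000000000000000000000000000000 : ℝ) * x^3 + (1441298379905850445727921/14175000000000000000000000000 : ℝ) * x^4 + (15352630410532319/756000000000000000000 : ℝ) * x^5 + (-58286959/45360000000000 : ℝ) * x^6 + (-1/3628800 : ℝ) * x^7) + ((40433497495194352724433080616670288119997458306677546879/61523437500000000000000000000000000000000000000000000000000000000 : ℝ) * x + (22283150617261224262767900802801394541772465878728221717096198918271/5685424804687500000000000000000000000000000000000000000000000000000000000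 : ℝ)) := by
    ring
  rw [key]
  have h1 : 0 ≤ (x - (58286959/25000000 : ℝ))^2 * ((52724303768478823256748049146060738488710845766291014983/395507812500000000000000000000000000000000000000000000000 : ℝ) + (19820079712616324993841743471312749456443087124313/885937500000000000000000000000000000000000000000000 : ℝ) * x^1 + (-31497734102548050073588377559097051178799/5906250000000000000000000000000000000000000 : ℝ) * x^2 + (-290630896482905565584724943517761/283500000000000000000000000000000000 : ℝ) * x^3 + (1441298379905850445727921/14175000000000000000000000000 : ℝ) * x^4 + (15352630410532319/756000000000000000000 : ℝ) * x^5 + (-58286959/45360000000000 : ℝ) * x^6 + (-1/3628800 : ℝ) * x^7) := mul_nonneg (sq_nonneg _) hg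
  have h2 : 0 ≤ (40433497495194352724433080616670288119997458306677546879/61523437500000000000000000000000000000000000000000000000000000000 : ℝ) * x + (22283150617261224262767900802801394541772465878728221717096198918271/5685424804687500000000000000000000000000000000000000000000000000000000000 : ℝ) := by positivity
  linarith


private lemma sin_sq_le_lin (θ : ℝ) (h0 : 0 ≤ θ) (h1 : θ ≤ π/2) :
    Real.sin θ^2 ≤ 50/69 * θ := by
  have hx : (0:ℝ) ≤ 2*θ := by linarith
  have hx' : 2*θ ≤ 3.15 := by
    have := Real.pi_lt_d2
    linarith
  have hcos := cos_ge_poly10 (2*θ) hx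
  have hp := mul_nonneg hx (p_certificate (2*θ) hx hx')
  have hhalf : Real.sin θ^2 = 1/2 - Real.cos (2*θ)/2 := Real.sin_sq_eq_half_sub θ
  nlinarith [hp, hcos, hhalf]

private lemma integral_exp_neg_mul (c s : ℝ) (hc : c ≠ 0) :
    ∫ θ in (0:ℝ)..s, Real.exp (-(c*θ)) = (1 - Real.exp (-(c*s)))/c := by
  have h : ∀ θ ∈ Set.uIcc (0:ℝ) s,
      HasDerivAt (fun y => -Real.exp (-(c*y))/c) (Real.exp (-(c*θ))) θ := by
    intro θ _
    have h1 : HasDerivAt (fun y : ℝ => -(c*y)) (-c) θ := by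
      simpa using ((hasDerivAt_id θ).const_mul c).fun_neg
    have h2 := (Real.hasDerivAt_exp (-(c*θ))).comp θ h1
    have h3 := h2.neg.div_const c
    convert h3 using 1
    · rfl
    · rfl
    · funext y; simp
    · field_simp
  have hi : IntervalIntegrable (fun θ => Real.exp (-(c*θ))) MeasureTheory.volume 0 s :=
    (Real.continuous_exp.comp (by continuity)).intervalIntegrable _ _
  rw [intervalIntegral.integral_eq_sub_of_hasDerivAt h hi]
  simp [Real.exp_zero]
  field_simp
  ring

/-- Lemma 13, upper bound `\underline{g_L}(r) ≤ \underline{g_2}(r)` with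
`m = 1/1.38 = 50/69`: the double integral is bounded below by
`(4/(m²β²))(mβr − (2/π)(1 − e^{−mβrπ/2}))`, and consequently
`e^{−βr}exp(−4λ∫₀^r∫₀^{π/2} t e^{−βt sin²θ}dθdt)` is bounded above by
`exp(−βr − (4λ/(m²β²))(mβr − (2/π)(1 − e^{−mβrπ/2})))`. -/
theorem stmt_14 (β r : ℝ) (hβ : 0 < β) (hr : 0 ≤ r) :
    (4 / ((50 / 69 : ℝ) ^ 2 * β ^ 2) *
        ((50 / 69 : ℝ) * β * r
          - 2 / π * (1 - Real.exp (-((50 / 69 : ℝ) * β * r * π / 2))))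
      ≤ 4 * ∫ t in (0:ℝ)..r, ∫ θ in (0:ℝ)..(π / 2),
          t * Real.exp (-β * t * Real.sin θ ^ 2))
    ∧ ∀ lam : ℝ, 0 < lam →
        Real.exp (-β * r) *
            Real.exp (-4 * lam * ∫ t in (0:ℝ)..r, ∫ θ in (0:ℝ)..(π / 2),
              t * Real.exp (-β * t * Real.sin θ ^ 2))
          ≤ Real.exp (-β * r - 4 * lam / ((50 / 69 : ℝ) ^ 2 * β ^ 2) *
              ((50 / 69 : ℝ) * β * r
                - 2 / π * (1 - Real.exp (-((50 / 69 : ℝ) * β * r * π / 2))))) := by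
  have hπ := Real.pi_pos
  set c : ℝ := 50/69 * β with hc
  have hc0 : 0 < c := by positivity
  set k : ℝ := c * (π/2) with hk
  have hk0 : 0 < k := by positivity
  -- inner integral lower bound
  have inner_bound : ∀ t ∈ Set.Icc (0:ℝ) r,
      (1 - Real.exp (-(k*t)))/c ≤ ∫ θ in (0:ℝ)..(π/2),
        t * Real.exp (-β * t * Real.sin θ ^ 2) := by
    intro t ht
    obtain ⟨ht0, _⟩ := ht
    have heval : ∫ θ in (0:ℝ)..(π/2), t * Real.exp (-(c*t*θ))
        = (1 - Real.exp (-(k*t)))/c := by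
      rcases ht0.eq_or_lt with h0 | h0
      · simp [← h0]
      · have hne : c * t ≠ 0 := by positivity
        rw [intervalIntegral.integral_const_mul,
          integral_exp_neg_mul (c*t) (π/2) hne]
        have harg : (c*t)*(π/2) = k*t := by rw [hk]; ring
        rw [harg]
        field_simp
    rw [← heval]
    apply intervalIntegral.integral_mono_on (by positivity)
    · exact ((continuous_const.mul
        (Real.continuous_exp.comp (by continuity))).intervalIntegrable _ _)
    · exact ((continuous_const.mul
        (Real.continuous_exp.comp (by continuity))).intervalIntegrable _ _)
    · intro θ hθ
      obtain ⟨hθ0, hθ1⟩ := hθ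
      apply mul_le_mul_of_nonneg_left _ ht0
      apply Real.exp_le_exp.2
      have := mul_le_mul_of_nonneg_left (sin_sq_le_lin θ hθ0 hθ1)
        (mul_nonneg hβ.le ht0)
      rw [hc]
      nlinarith
  -- continuity of the inner integral in t
  have hJcont : Continuous fun t : ℝ => ∫ θ in (0:ℝ)..(π/2),
      t * Real.exp (-β * t * Real.sin θ ^ 2) := by
    apply intervalIntegral.continuous_parametric_intervalIntegral_of_continuous'
    exact continuous_fst.mul (Real.continuous_exp.comp
      (((continuous_const.mul continuous_fst).mul
        ((Real.continuous_sin.comp continuous_snd).pow 2))))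
  have hEcont : Continuous fun t : ℝ => (1 - Real.exp (-(k*t)))/c := by continuity
  have outer : ∫ t in (0:ℝ)..r, (1 - Real.exp (-(k*t)))/c
      ≤ ∫ t in (0:ℝ)..r, ∫ θ in (0:ℝ)..(π/2),
          t * Real.exp (-β * t * Real.sin θ ^ 2) :=
    intervalIntegral.integral_mono_on hr (hEcont.intervalIntegrable _ _)
      (hJcont.intervalIntegrable _ _) inner_bound
  have eval_outer : ∫ t in (0:ℝ)..r, (1 - Real.exp (-(k*t)))/c
      = (r - (1 - Real.exp (-(k*r)))/k)/c := by
    rw [intervalIntegral.integral_div]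
    congr 1
    have hint : IntervalIntegrable (fun x : ℝ => Real.exp (-(k*x))) volume 0 r :=
      (by fun_prop : Continuous fun x : ℝ => Real.exp (-(k*x))).intervalIntegrable _ _
    rw [intervalIntegral.integral_sub intervalIntegrable_const hint,
      integral_exp_neg_mul k r hk0.ne']
    simp
  have key : 4 / ((50 / 69 : ℝ) ^ 2 * β ^ 2) *
        ((50 / 69 : ℝ) * β * r
          - 2 / π * (1 - Real.exp (-((50 / 69 : ℝ) * β * r * π / 2))))
      = 4 * ((r - (1 - Real.exp (-(k*r)))/k)/c) := by
    have harg : -(k*r) = -((50 / 69 : ℝ) * β * r * π / 2) := by rw [hk, hc]; ring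
    rw [harg, hk, hc]
    have hβ' : β ≠ 0 := hβ.ne'
    have hπ' : π ≠ 0 := hπ.ne'
    field_simp
  have part1 : 4 / ((50 / 69 : ℝ) ^ 2 * β ^ 2) *
        ((50 / 69 : ℝ) * β * r
          - 2 / π * (1 - Real.exp (-((50 / 69 : ℝ) * β * r * π / 2))))
      ≤ 4 * ∫ t in (0:ℝ)..r, ∫ θ in (0:ℝ)..(π / 2),
          t * Real.exp (-β * t * Real.sin θ ^ 2) := by
    rw [key, ← eval_outer]
    linarith
  refine ⟨part1, fun lam hlam => ?_⟩
  rw [← Real.exp_add]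
  apply Real.exp_le_exp.2
  have h2 := mul_le_mul_of_nonneg_left part1 hlam.le
  set I : ℝ := ∫ t in (0:ℝ)..r, ∫ θ in (0:ℝ)..(π / 2),
      t * Real.exp (-β * t * Real.sin θ ^ 2) with hI
  set X : ℝ := (50 / 69 : ℝ) * β * r
      - 2 / π * (1 - Real.exp (-((50 / 69 : ℝ) * β * r * π / 2))) with hX
  have e1 : 4 * lam / ((50 / 69 : ℝ) ^ 2 * β ^ 2) * X
      = lam * (4 / ((50 / 69 : ℝ) ^ 2 * β ^ 2) * X) := by ring
  have e2 : lam * (4 * I) = 4 * lam * I := by ring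
  linarith
end

section
/- Let m = 1/1.38 (i.e., m = 50/69). For all β > 0 and r ≥ 0, 4 ∫₀^r ∫₀^{π/2} t e^{−βt sin²θ} dθ dt ≤ (4/(mβ²)) · [ (1 − e^{−βr(1 − mπ/2)})/(1 − mπ/2) − (1 − e^{−βr}) ]. Consequently, e^{−βr} exp(−4λ∫₀^r∫₀^{π/2} t e^{−βt sin²θ} dθ dt) ≥ exp( −βr − (4λ/(mβ²))[ (1 − e^{−βr(1−mπ/2)})/(1 − mπ/2) − (1 − e^{−βr}) ] ) for every λ > 0. -/
open MeasureTheory Real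

lemma my_int_mono {x : ℝ} (hx : 0 ≤ x) {f g : ℝ → ℝ} (hf : Continuous f)
    (hg : Continuous g) (h : ∀ t ∈ Set.Icc (0:ℝ) x, f t ≤ g t) :
    ∫ t in (0:ℝ)..x, f t ≤ ∫ t in (0:ℝ)..x, g t :=
  intervalIntegral.integral_mono_on hx (hf.intervalIntegrable _ _) (hg.intervalIntegrable _ _) h

lemma poly_int (x : ℝ) (n : ℕ) (c : ℝ) : ∫ t in (0:ℝ)..x, t^n/c = x^(n+1)/((n+1)*c) := by
  have hn : ((n:ℝ)+1) ≠ 0 := by positivity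
  rw [intervalIntegral.integral_div, integral_pow]
  rcases eq_or_ne c 0 with rfl | hc
  · simp
  · field_simp
    simp

lemma id_int (x : ℝ) : ∫ t in (0:ℝ)..x, t = x^2/2 := by
  rw [integral_id]; ring

lemma T2 {x : ℝ} (hx : 0 ≤ x) : 1 - x^2/2 ≤ Real.cos x := by
  have h := my_int_mono hx Real.continuous_sin (by continuity : Continuous (fun t : ℝ => t))
    (fun t ht => Real.sin_le ht.1)
  rw [integral_sin, id_int] at h
  norm_num at h; linarith

lemma T3 {x : ℝ} (hx : 0 ≤ x) : x - x^3/6 ≤ Real.sin x := by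
  have h := my_int_mono hx (by continuity : Continuous (fun t : ℝ => 1 - Real.cos t))
    (by continuity : Continuous (fun t : ℝ => t^2/2)) (fun t ht => by
      have := T2 ht.1; linarith)
  have h1 : ∫ t in (0:ℝ)..x, (1 - Real.cos t) = x - Real.sin x := by
    rw [intervalIntegral.integral_sub intervalIntegrable_const
      (Real.continuous_cos.intervalIntegrable _ _), integral_cos,
      intervalIntegral.integral_const]
    simp
  rw [h1, poly_int] at h; norm_num at h; linarith

lemma T4 {x : ℝ} (hx : 0 ≤ x) : Real.cos x ≤ 1 - x^2/2 + x^4/24 := by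
  have h := my_int_mono hx (by continuity : Continuous (fun t : ℝ => t - Real.sin t))
    (by continuity : Continuous (fun t : ℝ => t^3/6)) (fun t ht => by
      have := T3 ht.1; linarith)
  have h1 : ∫ t in (0:ℝ)..x, (t - Real.sin t) = x^2/2 - (1 - Real.cos x) := by
    rw [intervalIntegral.integral_sub
      ((by continuity : Continuous (fun t : ℝ => t)).intervalIntegrable _ _)
      (Real.continuous_sin.intervalIntegrable _ _), integral_sin, id_int]
    norm_num
  rw [h1, poly_int] at h; norm_num at h; linarith

lemma T5 {x : ℝ} (hx : 0 ≤ x) : Real.sin x ≤ x - x^3/6 + x^5/120 := by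
  have h := my_int_mono hx
    (by continuity : Continuous (fun t : ℝ => Real.cos t - (1 - t^2/2)))
    (by continuity : Continuous (fun t : ℝ => t^4/24)) (fun t ht => by
      have := T4 ht.1; linarith)
  have h1 : ∫ t in (0:ℝ)..x, (Real.cos t - (1 - t^2/2)) =
      Real.sin x - (x - x^3/6) := by
    rw [intervalIntegral.integral_sub (Real.continuous_cos.intervalIntegrable _ _)
      ((by continuity : Continuous (fun t : ℝ => 1 - t^2/2)).intervalIntegrable _ _),
      integral_cos, intervalIntegral.integral_sub intervalIntegrable_const
        ((by continuity : Continuous (fun t : ℝ => t^2/2)).intervalIntegrable _ _),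
      intervalIntegral.integral_const, poly_int]
    simp; ring
  rw [h1, poly_int] at h; norm_num at h; linarith

lemma T6 {x : ℝ} (hx : 0 ≤ x) : 1 - x^2/2 + x^4/24 - x^6/720 ≤ Real.cos x := by
  have h := my_int_mono hx
    (by continuity : Continuous (fun t : ℝ => Real.sin t - (t - t^3/6)))
    (by continuity : Continuous (fun t : ℝ => t^5/120)) (fun t ht => by
      have := T5 ht.1; linarith)
  have h1 : ∫ t in (0:ℝ)..x, (Real.sin t - (t - t^3/6)) =
      (1 - Real.cos x) - (x^2/2 - x^4/24) := by
    rw [intervalIntegral.integral_sub (Real.continuous_sin.intervalIntegrable _ _)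
      ((by continuity : Continuous (fun t : ℝ => t - t^3/6)).intervalIntegrable _ _),
      integral_sin, intervalIntegral.integral_sub
        ((by continuity : Continuous (fun t : ℝ => t)).intervalIntegrable _ _)
        ((by continuity : Continuous (fun t : ℝ => t^3/6)).intervalIntegrable _ _),
      id_int, poly_int]
    simp; ring
  rw [h1, poly_int] at h; norm_num at h; linarith

lemma T7 {x : ℝ} (hx : 0 ≤ x) : x - x^3/6 + x^5/120 - x^7/5040 ≤ Real.sin x := by
  have h := my_int_mono hx
    (by continuity : Continuous (fun t : ℝ => (1 - t^2/2 + t^4/24) - Real.cos t))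
    (by continuity : Continuous (fun t : ℝ => t^6/720)) (fun t ht => by
      have := T6 ht.1; linarith)
  have h1 : ∫ t in (0:ℝ)..x, ((1 - t^2/2 + t^4/24) - Real.cos t) =
      (x - x^3/6 + x^5/120) - Real.sin x := by
    rw [intervalIntegral.integral_sub
      ((by continuity : Continuous (fun t : ℝ => 1 - t^2/2 + t^4/24)).intervalIntegrable _ _)
      (Real.continuous_cos.intervalIntegrable _ _), integral_cos,
      intervalIntegral.integral_add
        ((by continuity : Continuous (fun t : ℝ => 1 - t^2/2)).intervalIntegrable _ _)
        ((by continuity : Continuous (fun t : ℝ => t^4/24)).intervalIntegrable _ _),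
      intervalIntegral.integral_sub intervalIntegrable_const
        ((by continuity : Continuous (fun t : ℝ => t^2/2)).intervalIntegrable _ _),
      intervalIntegral.integral_const, poly_int, poly_int]
    simp; ring
  rw [h1, poly_int] at h; norm_num at h; linarith

lemma x0_sin_lo : (0.394234737 : ℝ) ≤ Real.sin (81047/200000) := by
  have h := T7 (x := 81047/200000) (by norm_num)
  norm_num at h ⊢; linarith

lemma x0_sin_hi : Real.sin (81047/200000) ≤ 0.394235094 := by
  have h := T5 (x := 81047/200000) (by norm_num)
  norm_num at h ⊢; linarith

lemma x0_cos_lo : (0.919009759 : ℝ) ≤ Real.cos (81047/200000) := by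
  have h := T6 (x := 81047/200000) (by norm_num)
  norm_num at h ⊢; linarith

lemma x0_cos_hi : Real.cos (81047/200000) ≤ 0.919015910 := by
  have h := T4 (x := 81047/200000) (by norm_num)
  norm_num at h ⊢; linarith

lemma a_sin_hi : Real.sin (81047/100000) ≤ 50/69 := by
  have e : (81047/100000 : ℝ) = 2 * (81047/200000) := by norm_num
  rw [e, Real.sin_two_mul]
  have h1 := x0_sin_hi; have h2 := x0_cos_hi
  have h3 := x0_sin_lo; have h4 := x0_cos_lo
  nlinarith

lemma a_sin_lo : (0.7246109 : ℝ) ≤ Real.sin (81047/100000) := by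
  have e : (81047/100000 : ℝ) = 2 * (81047/200000) := by norm_num
  rw [e, Real.sin_two_mul]
  have h1 := x0_sin_lo; have h2 := x0_cos_lo
  nlinarith

lemma a_cos_hi : Real.cos (81047/100000) ≤ 0.6891581 := by
  have e : (81047/100000 : ℝ) = 2 * (81047/200000) := by norm_num
  rw [e, Real.cos_two_mul]
  have h3 := x0_sin_lo
  have h4 := x0_sin_hi
  have hpy := Real.sin_sq_add_cos_sq (81047/200000 : ℝ)
  nlinarith

lemma sin_anti {s t : ℝ} (hs : π/2 ≤ s) (hst : s ≤ t) (ht : t ≤ π) :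
    Real.sin t ≤ Real.sin s := by
  rw [← Real.sin_pi_sub s, ← Real.sin_pi_sub t]
  have hpi := Real.pi_pos
  exact Real.sin_le_sin_of_le_of_le_pi_div_two (by linarith) (by linarith) (by linarith)

lemma tangent {u u₀ : ℝ} (h1 : π/2 ≤ u) (h2 : u ≤ π) (h3 : π/2 ≤ u₀) (h4 : u₀ ≤ π) :
    Real.cos u₀ - Real.sin u₀ * (u - u₀) ≤ Real.cos u := by
  rcases le_total u u₀ with hle | hle
  · have key : Real.sin u₀ * (u₀ - u) ≤ ∫ t in u..u₀, Real.sin t := by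
      have h := intervalIntegral.integral_mono_on hle
        (_root_.intervalIntegrable_const (μ := volume) (c := Real.sin u₀))
        (Real.continuous_sin.intervalIntegrable _ _)
        (fun t ht => sin_anti (le_trans h1 ht.1) ht.2 h4)
      rw [intervalIntegral.integral_const] at h
      rw [smul_eq_mul] at h; linarith [h]
    rw [integral_sin] at key
    linarith
  · have key : ∫ t in u₀..u, Real.sin t ≤ Real.sin u₀ * (u - u₀) := by
      have h := intervalIntegral.integral_mono_on hle
        (Real.continuous_sin.intervalIntegrable _ _)
        (_root_.intervalIntegrable_const (μ := volume) (c := Real.sin u₀))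
        (fun t ht => sin_anti h3 ht.1 (le_trans ht.2 h2))
      rw [intervalIntegral.integral_const, smul_eq_mul] at h
      linarith [h]
    rw [integral_sin] at key
    linarith

lemma key_cos {u : ℝ} (h0 : 0 ≤ u) (h1 : u ≤ π) : 1 - (50/69)*u ≤ Real.cos u := by
  have hpl : (3.141592 : ℝ) ≤ π := le_of_lt Real.pi_gt_d6
  have hpu : π ≤ (3.141593 : ℝ) := le_of_lt Real.pi_lt_d6
  rcases le_total u (69/50) with hc | hc
  · have := T2 h0
    nlinarith
  · rcases le_total u (π/2) with hc2 | hc2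
    · have hcos : 0 ≤ Real.cos u := Real.cos_nonneg_of_mem_Icc ⟨by linarith, hc2⟩
      nlinarith
    · -- tangent at u₀ = π - a, a = 0.81047
      have htan := tangent (u := u) (u₀ := π - 81047/100000) hc2 h1 (by linarith)
        (by linarith)
      rw [Real.cos_pi_sub, Real.sin_pi_sub] at htan
      have hs1 := a_sin_hi
      have hs2 := a_sin_lo
      have hc3 := a_cos_hi
      have hmono : ((50:ℝ)/69 - Real.sin (81047/100000)) * (π/2)
          ≤ ((50:ℝ)/69 - Real.sin (81047/100000)) * u :=
        mul_le_mul_of_nonneg_left hc2 (by linarith)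
      have hprod : (0.7246109 : ℝ) * (3.141592/2 - 81047/100000)
          ≤ Real.sin (81047/100000) * (π/2 - 81047/100000) := by
        apply mul_le_mul hs2 (by linarith) (by norm_num) (by linarith)
      nlinarith

lemma key_sin {θ : ℝ} (h0 : 0 ≤ θ) (h1 : θ ≤ π/2) :
    1 + (50/69)*(θ - π/2) ≤ Real.sin θ^2 := by
  have h := key_cos (u := π - 2*θ) (by linarith) (by linarith)
  rw [Real.cos_pi_sub, Real.cos_two_mul] at h
  have hpy := Real.sin_sq_add_cos_sq θ
  linarith

lemma int_exp_mul (c A B : ℝ) (hc : c ≠ 0) :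
    ∫ x in A..B, Real.exp (c*x) = (Real.exp (c*B) - Real.exp (c*A))/c := by
  have h := intervalIntegral.mul_integral_comp_mul_left (a := A) (b := B) (c := c)
    (f := Real.exp)
  rw [integral_exp] at h
  rw [eq_div_iff hc]
  linarith [h]


/-- Lemma 13, lower bound `\underline{g_L}(r) ≥ \underline{g_1}(r)` with
`m = 1/1.38 = 50/69`: the double integral is bounded above by
`(4/(mβ²))[(1 − e^{−βr(1−mπ/2)})/(1 − mπ/2) − (1 − e^{−βr})]`, and consequently
`e^{−βr}exp(−4λ∫₀^r∫₀^{π/2} t e^{−βt sin²θ}dθdt)` is bounded below by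
`exp(−βr − (4λ/(mβ²))[(1 − e^{−βr(1−mπ/2)})/(1 − mπ/2) − (1 − e^{−βr})])`. -/
theorem stmt_15 (β r : ℝ) (hβ : 0 < β) (hr : 0 ≤ r) :
    (4 * ∫ t in (0:ℝ)..r, ∫ θ in (0:ℝ)..(π / 2),
        t * Real.exp (-β * t * Real.sin θ ^ 2)
      ≤ 4 / ((50 / 69 : ℝ) * β ^ 2) *
          ((1 - Real.exp (-(β * r * (1 - (50 / 69 : ℝ) * π / 2))))
              / (1 - (50 / 69 : ℝ) * π / 2)
            - (1 - Real.exp (-β * r))))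
    ∧ ∀ lam : ℝ, 0 < lam →
        Real.exp (-β * r - 4 * lam / ((50 / 69 : ℝ) * β ^ 2) *
            ((1 - Real.exp (-(β * r * (1 - (50 / 69 : ℝ) * π / 2))))
                / (1 - (50 / 69 : ℝ) * π / 2)
              - (1 - Real.exp (-β * r))))
          ≤ Real.exp (-β * r) *
              Real.exp (-4 * lam * ∫ t in (0:ℝ)..r, ∫ θ in (0:ℝ)..(π / 2),
                t * Real.exp (-β * t * Real.sin θ ^ 2)) := by
  have hpl : (3.141592:ℝ) ≤ π := Real.pi_gt_d6.le
  have hpu : π ≤ (3.141593:ℝ) := Real.pi_lt_d6.le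
  have hβ' : β ≠ 0 := ne_of_gt hβ
  have hA : 1 - (50/69:ℝ)*π/2 < 0 := by linarith
  have hAne : 1 - (50/69:ℝ)*π/2 ≠ 0 := ne_of_lt hA
  set H : ℝ → ℝ := fun t =>
    (Real.exp (-β*t*(1 - (50/69)*π/2)) - Real.exp (-β*t))/(β*(50/69)) with hHdef
  have hπ2 : (0:ℝ) ≤ π/2 := by linarith
  -- pointwise bound F t ≤ H t on [0, r]
  have hFH : ∀ t ∈ Set.Icc (0:ℝ) r,
      (∫ θ in (0:ℝ)..(π / 2), t * Real.exp (-β * t * Real.sin θ ^ 2)) ≤ H t := by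
    intro t ht
    have ht0 : 0 ≤ t := ht.1
    have step1 : (∫ θ in (0:ℝ)..(π / 2), t * Real.exp (-β * t * Real.sin θ ^ 2))
        ≤ ∫ θ in (0:ℝ)..(π/2),
        t * Real.exp (-β*t*(1 + (50/69)*(θ - π/2))) := by
      apply my_int_mono hπ2 (by fun_prop) (by fun_prop)
      intro θ hθ
      have hk := key_sin hθ.1 hθ.2
      have harg : -β*t*Real.sin θ^2 ≤ -β*t*(1 + (50/69)*(θ-π/2)) := by
        nlinarith [mul_nonneg (mul_nonneg hβ.le ht0)
          (sub_nonneg.2 hk)]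
      exact mul_le_mul_of_nonneg_left (Real.exp_le_exp.2 harg) ht0
    have step2 : (∫ θ in (0:ℝ)..(π/2),
        t * Real.exp (-β*t*(1 + (50/69)*(θ - π/2)))) = H t := by
      rcases eq_or_lt_of_le ht0 with rfl | htpos
      · simp [hHdef]
      · have hc : -β*t*(50/69) ≠ 0 := by
          apply ne_of_lt; nlinarith
        have hre : ∀ θ:ℝ, t * Real.exp (-β*t*(1 + (50/69)*(θ - π/2))) =
            (t * Real.exp (-β*t*(1-(50/69)*π/2))) * Real.exp ((-β*t*(50/69))*θ) := by
          intro θ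
          have harg : (-β*t*(1-(50/69:ℝ)*π/2)) + (-β*t*(50/69))*θ
              = -β*t*(1 + (50/69)*(θ - π/2)) := by ring
          rw [mul_assoc t, ← Real.exp_add, harg]
        simp only [hre]
        rw [intervalIntegral.integral_const_mul, int_exp_mul _ _ _ hc]
        have hE3 : Real.exp (-β*t*(1-(50/69)*π/2)) * Real.exp ((-β*t*(50/69))*(π/2))
            = Real.exp (-β*t) := by
          rw [← Real.exp_add]; congr 1; ring
        simp only [hHdef]
        rw [← hE3]
        rw [mul_zero, Real.exp_zero]
        have hβm : β*(50/69:ℝ) ≠ 0 := by positivity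
        rw [← mul_div_assoc, div_eq_div_iff hc hβm]
        ring
    linarith
  have hHcont : Continuous H := by
    rw [hHdef]
    apply Continuous.div_const
    exact (Real.continuous_exp.comp (by fun_prop)).sub (Real.continuous_exp.comp (by fun_prop))
  have hHnonneg : ∀ t ∈ Set.Icc (0:ℝ) r, 0 ≤ H t := by
    intro t ht
    apply div_nonneg _ (by positivity)
    apply sub_nonneg.2 (Real.exp_le_exp.2 _)
    nlinarith [mul_nonneg (mul_nonneg hβ.le ht.1) (by linarith : (0:ℝ) ≤ π)]
  have hIntIneq : (∫ t in (0:ℝ)..r, ∫ θ in (0:ℝ)..(π / 2),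
        t * Real.exp (-β * t * Real.sin θ ^ 2)) ≤ ∫ t in (0:ℝ)..r, H t := by
    by_cases hInt : IntervalIntegrable
        (fun t => ∫ θ in (0:ℝ)..(π / 2), t * Real.exp (-β * t * Real.sin θ ^ 2)) volume 0 r
    · exact intervalIntegral.integral_mono_on hr hInt
        (hHcont.intervalIntegrable _ _) hFH
    · rw [intervalIntegral.integral_undef hInt]
      exact intervalIntegral.integral_nonneg hr hHnonneg
  -- evaluate ∫ H
  have hc1 : -(β*(1-(50/69:ℝ)*π/2)) ≠ 0 := by
    simp only [ne_eq, neg_eq_zero, mul_eq_zero]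
    push_neg
    exact ⟨hβ', hAne⟩
  have hc2 : -β ≠ 0 := neg_ne_zero.2 hβ'
  have hHeval : ∫ t in (0:ℝ)..r, H t =
      ((Real.exp (-(β*(1-(50/69:ℝ)*π/2))*r) - 1)/(-(β*(1-(50/69:ℝ)*π/2)))
        - (Real.exp ((-β)*r) - 1)/(-β))/(β*(50/69)) := by
    have hHeq : ∀ t : ℝ, H t =
        (Real.exp ((-(β*(1-(50/69:ℝ)*π/2)))*t) - Real.exp ((-β)*t))/(β*(50/69)) := by
      intro t
      simp only [hHdef]
      rw [show -β*t*(1-(50/69:ℝ)*π/2) = -(β*(1-(50/69:ℝ)*π/2))*t from by ring]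
    simp only [hHeq]
    rw [intervalIntegral.integral_div, intervalIntegral.integral_sub
      ((by fun_prop : Continuous fun t:ℝ => Real.exp ((-(β*(1-(50/69:ℝ)*π/2)))*t)).intervalIntegrable _ _)
      ((by fun_prop : Continuous fun t:ℝ => Real.exp ((-β)*t)).intervalIntegrable _ _),
      int_exp_mul _ _ _ hc1, int_exp_mul _ _ _ hc2]
    norm_num
  have part1 : 4 * ∫ t in (0:ℝ)..r, ∫ θ in (0:ℝ)..(π / 2),
        t * Real.exp (-β * t * Real.sin θ ^ 2)
      ≤ 4 / ((50 / 69 : ℝ) * β ^ 2) *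
          ((1 - Real.exp (-(β * r * (1 - (50 / 69 : ℝ) * π / 2))))
              / (1 - (50 / 69 : ℝ) * π / 2)
            - (1 - Real.exp (-β * r))) := by
    have h4 : 4 * ∫ t in (0:ℝ)..r, H t
        = 4 / ((50 / 69 : ℝ) * β ^ 2) *
          ((1 - Real.exp (-(β * r * (1 - (50 / 69 : ℝ) * π / 2))))
              / (1 - (50 / 69 : ℝ) * π / 2)
            - (1 - Real.exp (-β * r))) := by
      rw [hHeval]
      rw [show -(β*(1-(50/69:ℝ)*π/2))*r = -(β * r * (1 - (50 / 69 : ℝ) * π / 2)) by ring]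
      have hAne' := hAne
      generalize Real.exp (-(β * r * (1 - (50 / 69 : ℝ) * π / 2))) = E1
      generalize Real.exp (-β * r) = E2
      generalize hA2 : (1 - (50 / 69 : ℝ) * π / 2) = A at hAne' ⊢
      field_simp
      ring
    linarith
  refine ⟨part1, ?_⟩
  intro lam hlam
  rw [← Real.exp_add]
  apply Real.exp_le_exp.2
  have h2 := mul_le_mul_of_nonneg_left part1 hlam.le
  have e1 : lam * (4 * ∫ t in (0:ℝ)..r, ∫ θ in (0:ℝ)..(π / 2),
      t * Real.exp (-β * t * Real.sin θ ^ 2))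
      = 4 * lam * ∫ t in (0:ℝ)..r, ∫ θ in (0:ℝ)..(π / 2),
      t * Real.exp (-β * t * Real.sin θ ^ 2) := by ring
  have e2 : lam * (4 / ((50 / 69 : ℝ) * β ^ 2) *
        ((1 - Real.exp (-(β * r * (1 - (50 / 69 : ℝ) * π / 2))))
            / (1 - (50 / 69 : ℝ) * π / 2) - (1 - Real.exp (-β * r))))
      = 4 * lam / ((50 / 69 : ℝ) * β ^ 2) *
        ((1 - Real.exp (-(β * r * (1 - (50 / 69 : ℝ) * π / 2))))
            / (1 - (50 / 69 : ℝ) * π / 2) - (1 - Real.exp (-β * r))) := by ring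
  rw [e1, e2] at h2
  linarith [h2]
end

section
/- For every x ∈ [0, π/2], sin²x ≤ x/1.38; equivalently, 1.38·sin²x ≤ x. -/
open Real

private lemma ladder {f f' : ℝ → ℝ} (hf : ∀ u, HasDerivAt f (f' u) u) (h0 : f 0 = 0)
    (hf' : ∀ u, 0 ≤ u → 0 ≤ f' u) : ∀ t, 0 ≤ t → 0 ≤ f t := by
  intro t ht
  have mono : MonotoneOn f (Set.Ici 0) :=
    monotoneOn_of_deriv_nonneg (convex_Ici 0)
      (fun u _ => (hf u).continuousAt.continuousWithinAt)
      (fun u _ => ((hf u).differentiableAt).differentiableWithinAt)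
      (fun u hu => by
        rw [(hf u).deriv]
        exact hf' u (le_of_lt (by simpa [interior_Ici] using hu)))
  simpa [h0] using mono Set.self_mem_Ici ht ht

private lemma sin3 : ∀ t : ℝ, 0 ≤ t → t - t^3/6 ≤ Real.sin t := by
  have h := ladder (f := fun u => Real.sin u - (u - u^3/6))
    (f' := fun u => Real.cos u - (1 - u^2/2))
    (fun u => by
      have h1 := (Real.hasDerivAt_sin u).sub
        ((hasDerivAt_id u).sub ((hasDerivAt_pow 3 u).div_const 6))
      exact h1.congr_deriv (by push_cast; ring))
    (by norm_num)
    (fun u _ => sub_nonneg.2 Real.one_sub_sq_div_two_le_cos)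
  intro t ht; linarith [h t ht]

private lemma cos4 : ∀ t : ℝ, 0 ≤ t → Real.cos t ≤ 1 - t^2/2 + t^4/24 := by
  have h := ladder (f := fun u => (1 - u^2/2 + u^4/24) - Real.cos u)
    (f' := fun u => Real.sin u - (u - u^3/6))
    (fun u => by
      have h1 := ((((hasDerivAt_const u (1:ℝ)).sub ((hasDerivAt_pow 2 u).div_const 2)).add
        ((hasDerivAt_pow 4 u).div_const 24)).sub (Real.hasDerivAt_cos u))
      exact h1.congr_deriv (by push_cast; ring))
    (by norm_num)
    (fun u hu => sub_nonneg.2 (sin3 u hu))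
  intro t ht; linarith [h t ht]

private lemma sin5 : ∀ t : ℝ, 0 ≤ t → Real.sin t ≤ t - t^3/6 + t^5/120 := by
  have h := ladder (f := fun u => (u - u^3/6 + u^5/120) - Real.sin u)
    (f' := fun u => (1 - u^2/2 + u^4/24) - Real.cos u)
    (fun u => by
      have h1 := ((((hasDerivAt_id u).sub ((hasDerivAt_pow 3 u).div_const 6)).add
        ((hasDerivAt_pow 5 u).div_const 120)).sub (Real.hasDerivAt_sin u))
      exact h1.congr_deriv (by push_cast; ring))
    (by norm_num)
    (fun u hu => sub_nonneg.2 (cos4 u hu))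
  intro t ht; linarith [h t ht]

private lemma cos6 : ∀ t : ℝ, 0 ≤ t → 1 - t^2/2 + t^4/24 - t^6/720 ≤ Real.cos t := by
  have h := ladder (f := fun u => Real.cos u - (1 - u^2/2 + u^4/24 - u^6/720))
    (f' := fun u => (u - u^3/6 + u^5/120) - Real.sin u)
    (fun u => by
      have h1 := (Real.hasDerivAt_cos u).sub ((((hasDerivAt_const u (1:ℝ)).sub
        ((hasDerivAt_pow 2 u).div_const 2)).add
        ((hasDerivAt_pow 4 u).div_const 24)).sub ((hasDerivAt_pow 6 u).div_const 720))
      exact h1.congr_deriv (by push_cast; ring))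
    (by norm_num)
    (fun u hu => sub_nonneg.2 (sin5 u hu))
  intro t ht; linarith [h t ht]

private lemma sin7 : ∀ t : ℝ, 0 ≤ t → t - t^3/6 + t^5/120 - t^7/5040 ≤ Real.sin t := by
  have h := ladder (f := fun u => Real.sin u - (u - u^3/6 + u^5/120 - u^7/5040))
    (f' := fun u => Real.cos u - (1 - u^2/2 + u^4/24 - u^6/720))
    (fun u => by
      have h1 := (Real.hasDerivAt_sin u).sub ((((hasDerivAt_id u).sub
        ((hasDerivAt_pow 3 u).div_const 6)).add
        ((hasDerivAt_pow 5 u).div_const 120)).sub ((hasDerivAt_pow 7 u).div_const 5040))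
      exact h1.congr_deriv (by push_cast; ring))
    (by norm_num)
    (fun u hu => sub_nonneg.2 (cos6 u hu))
  intro t ht; linarith [h t ht]

private lemma cos8 : ∀ t : ℝ, 0 ≤ t →
    Real.cos t ≤ 1 - t^2/2 + t^4/24 - t^6/720 + t^8/40320 := by
  have h := ladder (f := fun u => (1 - u^2/2 + u^4/24 - u^6/720 + u^8/40320) - Real.cos u)
    (f' := fun u => Real.sin u - (u - u^3/6 + u^5/120 - u^7/5040))
    (fun u => by
      have h1 := (((((hasDerivAt_const u (1:ℝ)).sub
        ((hasDerivAt_pow 2 u).div_const 2)).add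
        ((hasDerivAt_pow 4 u).div_const 24)).sub ((hasDerivAt_pow 6 u).div_const 720)).add
        ((hasDerivAt_pow 8 u).div_const 40320)).sub (Real.hasDerivAt_cos u)
      exact h1.congr_deriv (by push_cast; ring))
    (by norm_num)
    (fun u hu => sub_nonneg.2 (sin7 u hu))
  intro t ht; linarith [h t ht]

private lemma sin9 : ∀ t : ℝ, 0 ≤ t →
    Real.sin t ≤ t - t^3/6 + t^5/120 - t^7/5040 + t^9/362880 := by
  have h := ladder (f := fun u => (u - u^3/6 + u^5/120 - u^7/5040 + u^9/362880) - Real.sin u)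
    (f' := fun u => (1 - u^2/2 + u^4/24 - u^6/720 + u^8/40320) - Real.cos u)
    (fun u => by
      have h1 := (((((hasDerivAt_id u).sub
        ((hasDerivAt_pow 3 u).div_const 6)).add
        ((hasDerivAt_pow 5 u).div_const 120)).sub ((hasDerivAt_pow 7 u).div_const 5040)).add
        ((hasDerivAt_pow 9 u).div_const 362880)).sub (Real.hasDerivAt_sin u)
      exact h1.congr_deriv (by push_cast; ring))
    (by norm_num)
    (fun u hu => sub_nonneg.2 (cos8 u hu))
  intro t ht; linarith [h t ht]

private lemma cos10 : ∀ t : ℝ, 0 ≤ t →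
    1 - t^2/2 + t^4/24 - t^6/720 + t^8/40320 - t^10/3628800 ≤ Real.cos t := by
  have h := ladder
    (f := fun u => Real.cos u - (1 - u^2/2 + u^4/24 - u^6/720 + u^8/40320 - u^10/3628800))
    (f' := fun u => (u - u^3/6 + u^5/120 - u^7/5040 + u^9/362880) - Real.sin u)
    (fun u => by
      have h1 := (Real.hasDerivAt_cos u).sub ((((((hasDerivAt_const u (1:ℝ)).sub
        ((hasDerivAt_pow 2 u).div_const 2)).add
        ((hasDerivAt_pow 4 u).div_const 24)).sub ((hasDerivAt_pow 6 u).div_const 720)).add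
        ((hasDerivAt_pow 8 u).div_const 40320)).sub ((hasDerivAt_pow 10 u).div_const 3628800))
      exact h1.congr_deriv (by push_cast; ring))
    (by norm_num)
    (fun u hu => sub_nonneg.2 (sin9 u hu))
  intro t ht; linarith [h t ht]

/-- The key polynomial inequality: `Q(x) ≤ x/1.38` on `[0, 1.5708]`, where
`Q(x) = x² - x⁴/3 + 2x⁶/45 - x⁸/315 + 2x¹⁰/14175` is an upper bound for `sin²x`. -/
private lemma poly_key (x : ℝ) (hx0 : 0 ≤ x) (hxu : x ≤ 1.5708) :
    x^2 - x^4/3 + 2*x^6/45 - x^8/315 + 2*x^10/14175 ≤ x / 1.38 := by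
  have h138 : x / 1.38 = 50 * x / 69 := by norm_num; ring
  rw [h138]
  rcases le_or_gt x (7/10) with h7 | h7
  · -- small x : interval arithmetic on the cofactor g(x) = x/1.38 - Q(x) over x
    have hg : 0 ≤ 50/69 - x + x^3/3 - 2*x^5/45 + x^7/315 - 2*x^9/14175 := by
      have p3 : 0 ≤ x^3 := pow_nonneg hx0 3
      have p7 : 0 ≤ x^7 := pow_nonneg hx0 7
      have p5 : x^5 ≤ (7/10)^5 := pow_le_pow_left₀ hx0 h7 5
      have p9 : x^9 ≤ (7/10)^9 := pow_le_pow_left₀ hx0 h7 9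
      norm_num at p5 p9 ⊢
      linarith
    nlinarith [mul_nonneg hx0 hg]
  · -- large x : certificate  x/1.38 - Q(x) = (x - a)² q(x) + R(x),  a = 145717/125000
    have h7' : (7:ℝ)/10 ≤ x := h7.le
    have hq : 0 ≤ (-3753129/1000000000000 : ℝ) + (106646233131/200000000000)*x
        + (89487839753/500000000000)*x^2 + (-85327052131/1000000000000)*x^3
        + (-32804954763/1000000000000)*x^4 + (3253718301/500000000000)*x^5
        + (1299695149/500000000000)*x^6 + (-65791097/200000000000)*x^7
        + (-70546737/500000000000)*x^8 := by
      have h0 : (0:ℝ) ≤ 7/10 := by norm_num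
      have h09 : (0:ℝ) ≤ 9/10 := by norm_num
      have h011 : (0:ℝ) ≤ 11/10 := by norm_num
      have h013 : (0:ℝ) ≤ 13/10 := by norm_num
      rcases le_or_gt x (9/10) with h9 | h9
      · have l2 := pow_le_pow_left₀ h0 h7' 2
        have l5 := pow_le_pow_left₀ h0 h7' 5
        have l6 := pow_le_pow_left₀ h0 h7' 6
        have u3 := pow_le_pow_left₀ hx0 h9 3
        have u4 := pow_le_pow_left₀ hx0 h9 4
        have u7 := pow_le_pow_left₀ hx0 h9 7
        have u8 := pow_le_pow_left₀ hx0 h9 8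
        norm_num at *
        linarith
      · rcases le_or_gt x (11/10) with h11 | h11
        · have l2 := pow_le_pow_left₀ h09 h9.le 2
          have l5 := pow_le_pow_left₀ h09 h9.le 5
          have l6 := pow_le_pow_left₀ h09 h9.le 6
          have u3 := pow_le_pow_left₀ hx0 h11 3
          have u4 := pow_le_pow_left₀ hx0 h11 4
          have u7 := pow_le_pow_left₀ hx0 h11 7
          have u8 := pow_le_pow_left₀ hx0 h11 8
          norm_num at *
          linarith
        · rcases le_or_gt x (13/10) with h13 | h13
          · have l2 := pow_le_pow_left₀ h011 h11.le 2
            have l5 := pow_le_pow_left₀ h011 h11.le 5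
            have l6 := pow_le_pow_left₀ h011 h11.le 6
            have u3 := pow_le_pow_left₀ hx0 h13 3
            have u4 := pow_le_pow_left₀ hx0 h13 4
            have u7 := pow_le_pow_left₀ hx0 h13 7
            have u8 := pow_le_pow_left₀ hx0 h13 8
            norm_num at *
            linarith
          · have l2 := pow_le_pow_left₀ h013 h13.le 2
            have l5 := pow_le_pow_left₀ h013 h13.le 5
            have l6 := pow_le_pow_left₀ h013 h13.le 6
            have u3 := pow_le_pow_left₀ hx0 hxu 3
            have u4 := pow_le_pow_left₀ hx0 hxu 4
            have u7 := pow_le_pow_left₀ hx0 hxu 7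
            have u8 := pow_le_pow_left₀ hx0 hxu 8
            norm_num at *
            linarith
    have hprod : (0:ℝ) ≤ (-79691854780304481/15625000000000000000000)
        + (2264494173224472562659/3125000000000000000000)*x
        + (-7812499999998299804983/7812500000000000000000)*x^2
        + (12647696341/15625000000000000000000)*x^3
        + (5208333333322147004093/15625000000000000000000)*x^4
        + (2210947789/7812500000000000000000)*x^5
        + (-347222222223605725739/7812500000000000000000)*x^6
        + (-1136775633/3125000000000000000000)*x^7
        + (24801587308342237407/7812500000000000000000)*x^8
        + (-30821/31250000000000000)*x^9 + (-70546737/500000000000)*x^10 := by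
      have h := mul_nonneg (sq_nonneg (x - 145717/125000)) hq
      calc (0:ℝ) ≤ (x - 145717/125000)^2 * ((-3753129/1000000000000 : ℝ)
            + (106646233131/200000000000)*x
            + (89487839753/500000000000)*x^2 + (-85327052131/1000000000000)*x^3
            + (-32804954763/1000000000000)*x^4 + (3253718301/500000000000)*x^5
            + (1299695149/500000000000)*x^6 + (-65791097/200000000000)*x^7
            + (-70546737/500000000000)*x^8) := h
        _ = _ := by ring
    have u1 : x ≤ (1.5708:ℝ) := hxu
    have u2 := pow_le_pow_left₀ hx0 hxu 2
    have u3 := pow_le_pow_left₀ hx0 hxu 3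
    have u4 := pow_le_pow_left₀ hx0 hxu 4
    have u5 := pow_le_pow_left₀ hx0 hxu 5
    have u6 := pow_le_pow_left₀ hx0 hxu 6
    have u7 := pow_le_pow_left₀ hx0 hxu 7
    have u8 := pow_le_pow_left₀ hx0 hxu 8
    have u9 := pow_le_pow_left₀ hx0 hxu 9
    have u10 := pow_le_pow_left₀ hx0 hxu 10
    have n2 : 0 ≤ x^2 := pow_nonneg hx0 2
    have n3 : 0 ≤ x^3 := pow_nonneg hx0 3
    have n4 : 0 ≤ x^4 := pow_nonneg hx0 4
    have n5 : 0 ≤ x^5 := pow_nonneg hx0 5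
    have n6 : 0 ≤ x^6 := pow_nonneg hx0 6
    have n7 : 0 ≤ x^7 := pow_nonneg hx0 7
    have n8 : 0 ≤ x^8 := pow_nonneg hx0 8
    have n9 : 0 ≤ x^9 := pow_nonneg hx0 9
    have n10 : 0 ≤ x^10 := pow_nonneg hx0 10
    norm_num at u1 u2 u3 u4 u5 u6 u7 u8 u9 u10
    linarith [hprod, u1, u2, u3, u4, u5, u6, u7, u8, u9, u10,
      n2, n3, n4, n5, n6, n7, n8, n9, n10]

/-- Upper half of the linear bound on `sin²` (Appendix G, equation (93) with
`m = 1/1.38`): for `x ∈ [0, π/2]`, `sin²x ≤ x/1.38`, equivalently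
`1.38·sin²x ≤ x`. -/
theorem stmt_16 :
    ∀ x ∈ Set.Icc (0:ℝ) (π / 2),
      Real.sin x ^ 2 ≤ x / 1.38 ∧ 1.38 * Real.sin x ^ 2 ≤ x := by
  intro x hx
  obtain ⟨hx0, hxp⟩ := hx
  have hpi : π < 3.141593 := Real.pi_lt_d6
  have hxu : x ≤ 1.5708 := by
    have : π / 2 ≤ 1.5708 := by norm_num at hpi ⊢; linarith
    exact hxp.trans this
  have hc := cos10 (2*x) (by linarith)
  have hsq : Real.sin x ^ 2 = 1/2 - Real.cos (2*x)/2 := by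
    have h1 := Real.cos_two_mul x
    have h2 := Real.sin_sq_add_cos_sq x
    linarith
  have hQ : Real.sin x ^ 2 ≤ x^2 - x^4/3 + 2*x^6/45 - x^8/315 + 2*x^10/14175 := by
    rw [hsq]
    nlinarith [hc]
  have key := poly_key x hx0 hxu
  constructor
  · linarith
  · have h1 : Real.sin x ^ 2 ≤ x / 1.38 := le_trans hQ key
    norm_num at h1 ⊢
    linarith
end

section
/- Let m ∈ (0,1). Then for every x ∈ [0, π/2], sin²x − mx ≤ max( 0, (1 + √(1 − m²) − m(π − arcsin m))/2 ). -/
/-!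
With `s = arcsin m`, the derivative of `f x = sin² x - m x` is `sin 2x - m`, which is `≤ 0` on
`[0, s/2]`, `≥ 0` on `[s/2, (π - s)/2]` and `≤ 0` on `[(π - s)/2, π/2]`. So on `[0, π/2]` the function
`f` is bounded by `f 0 = 0` left of `s/2` and by its value at the turning point `(π - s)/2` right of it;
that value is computed from `cos (π - s) = -√(1 - m²)`.
-/

open Real Set

theorem le_of_hasDerivAt_nonneg_of_nonpos {f f' : ℝ → ℝ} {a b c x : ℝ}
    (hf : ∀ y, HasDerivAt f (f' y) y) (hab : ∀ y ∈ Ioo a b, 0 ≤ f' y)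
    (hbc : ∀ y ∈ Ioo b c, f' y ≤ 0) (hx : x ∈ Icc a c) : f x ≤ f b := by
  have hcont : Continuous f := continuous_iff_continuousAt.2 fun y => (hf y).continuousAt
  rcases le_total x b with hxb | hbx
  · refine monotoneOn_of_hasDerivWithinAt_nonneg (convex_Icc a b) hcont.continuousOn
      (fun y _ => (hf y).hasDerivWithinAt) (fun y hy => hab y ?_) ⟨hx.1, hxb⟩
      ⟨hx.1.trans hxb, le_rfl⟩ hxb
    rwa [interior_Icc] at hy
  · refine antitoneOn_of_hasDerivWithinAt_nonpos (convex_Icc b c) hcont.continuousOn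
      (fun y _ => (hf y).hasDerivWithinAt) (fun y hy => hbc y ?_) ⟨le_rfl, hbx.trans hx.2⟩
      ⟨hbx, hx.2⟩ hbx
    rwa [interior_Icc] at hy

theorem hasDerivAt_sin_sq_sub_mul (m x : ℝ) :
    HasDerivAt (fun y => sin y ^ 2 - m * y) (sin (2 * x) - m) x := by
  refine (((hasDerivAt_sin x).pow 2).sub ((hasDerivAt_id' x).const_mul m)).congr_deriv ?_
  rw [sin_two_mul]
  ring

section SignOfSinTwoMulSub

variable {m x : ℝ} (hm₁ : -1 ≤ m) (hm₂ : m ≤ 1)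
include hm₁ hm₂

theorem sin_two_mul_le_of_le_arcsin_div_two (hx₀ : 0 ≤ x) (hx : x ≤ arcsin m / 2) :
    sin (2 * x) ≤ m := by
  rw [← sin_arcsin hm₁ hm₂]
  exact sin_le_sin_of_le_of_le_pi_div_two (by linarith [pi_pos]) (arcsin_le_pi_div_two m)
    (by linarith)

theorem le_sin_two_mul_of_mem_Icc (hx : x ∈ Icc (arcsin m / 2) ((π - arcsin m) / 2)) :
    m ≤ sin (2 * x) := by
  obtain ⟨hlo, hhi⟩ := hx
  have hs := neg_pi_div_two_le_arcsin m
  rw [← sin_arcsin hm₁ hm₂]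
  rcases le_total (2 * x) (π / 2) with h | h
  · exact sin_le_sin_of_le_of_le_pi_div_two hs h (by linarith)
  · rw [← sin_pi_sub (2 * x)]
    exact sin_le_sin_of_le_of_le_pi_div_two hs (by linarith) (by linarith)

theorem sin_two_mul_le_of_pi_sub_arcsin_div_two_le (hx : (π - arcsin m) / 2 ≤ x)
    (hx₂ : x ≤ π / 2) : sin (2 * x) ≤ m := by
  rw [← sin_pi_sub, ← sin_arcsin hm₁ hm₂]
  exact sin_le_sin_of_le_of_le_pi_div_two (by linarith [pi_pos]) (arcsin_le_pi_div_two m)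
    (by linarith)

end SignOfSinTwoMulSub

theorem sin_sq_sub_mul_pi_sub_arcsin_div_two (m : ℝ) :
    sin ((π - arcsin m) / 2) ^ 2 - m * ((π - arcsin m) / 2)
      = (1 + √(1 - m ^ 2) - m * (π - arcsin m)) / 2 := by
  rw [sin_sq_eq_half_sub, mul_div_cancel₀ _ two_ne_zero, cos_pi_sub, cos_arcsin]
  ring

/-- Maximization computation of Appendix G: for `m ∈ (0,1)` and
`x ∈ [0, π/2]`, `sin²x − mx ≤ max(0, (1 + √(1−m²) − m(π − arcsin m))/2)`. -/
theorem stmt_18 (m : ℝ) (hm : m ∈ Set.Ioo (0:ℝ) 1) :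
    ∀ x ∈ Set.Icc (0:ℝ) (π / 2),
      Real.sin x ^ 2 - m * x
        ≤ max 0 ((1 + Real.sqrt (1 - m ^ 2) - m * (π - Real.arcsin m)) / 2) := by
  rintro x ⟨hx₀, hx₂⟩
  have hm₁ : -1 ≤ m := by linarith [hm.1]
  have hm₂ : m ≤ 1 := hm.2.le
  have hs : 0 ≤ arcsin m := arcsin_nonneg.2 hm.1.le
  set f : ℝ → ℝ := fun y => sin y ^ 2 - m * y
  change f x ≤ _
  rcases le_total x (arcsin m / 2) with hxs | hsx
  · have hanti : AntitoneOn f (Icc 0 (arcsin m / 2)) :=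
      antitoneOn_of_hasDerivWithinAt_nonpos (convex_Icc _ _) (by fun_prop)
        (fun y _ => (hasDerivAt_sin_sq_sub_mul m y).hasDerivWithinAt) fun y hy => by
          rw [interior_Icc] at hy
          linarith [sin_two_mul_le_of_le_arcsin_div_two hm₁ hm₂ hy.1.le hy.2.le]
    calc f x ≤ f 0 := hanti ⟨le_rfl, by linarith⟩ ⟨hx₀, hxs⟩ hx₀
      _ = 0 := by simp [f]
      _ ≤ _ := le_max_left _ _
  · calc f x ≤ f ((π - arcsin m) / 2) :=
          le_of_hasDerivAt_nonneg_of_nonpos (hasDerivAt_sin_sq_sub_mul m)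
            (fun y hy => sub_nonneg.2 (le_sin_two_mul_of_mem_Icc hm₁ hm₂ (Ioo_subset_Icc_self hy)))
            (fun y hy => sub_nonpos.2
              (sin_two_mul_le_of_pi_sub_arcsin_div_two_le hm₁ hm₂ hy.1.le hy.2.le)) ⟨hsx, hx₂⟩
      _ = _ := sin_sq_sub_mul_pi_sub_arcsin_div_two m
      _ ≤ _ := le_max_right _ _
end
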